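/- arXiv:2601.23171 — 6 statements merged into one kernel-verified Lean document; each statement's English description precedes it below -/
import Mathlib

section
/- Let X1, X2 be i.i.d. uniform on [θ−1, θ+1], M = (X1+X2)/2, V = X2−X1. For k > 0, the confidence interval M ± k|V| has coverage probability P(θ ∈ [M−k|V|, M+k|V|]) = 1 − 1/(1+2k). Equivalently, for 0 < α < 1, taking k_α = (1−α)/(2α) gives exact coverage 1−α. -/
open MeasureTheory ProbabilityTheory Set
open scoped ENNReal

noncomputable def unifIcc (a b : ℝ) : Measure ℝ :=
  (ENNReal.ofReal (b - a))⁻¹ • volume.restrict (Icc a b)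

noncomputable def joint (θ : ℝ) : Measure (ℝ × ℝ) :=
  (unifIcc (θ-1) (θ+1)).prod (unifIcc (θ-1) (θ+1))


lemma calc_vol (T : Set (ℝ × ℝ)) (hT : MeasurableSet T) (G : ℝ → ℝ) (hG : Continuous G)
    (hGpos : ∀ x ∈ Icc (-1:ℝ) 1, 0 ≤ G x)
    (hsec : ∀ᵐ x : ℝ, volume (Prod.mk x ⁻¹' T)
      = ENNReal.ofReal (Set.indicator (Icc (-1) 1) G x)) :
    volume T = ENNReal.ofReal (∫ x in (-1:ℝ)..1, G x) := by
  rw [Measure.volume_eq_prod, Measure.prod_apply hT, lintegral_congr_ae hsec]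
  have h1 : ∀ x : ℝ, ENNReal.ofReal (Set.indicator (Icc (-1:ℝ) 1) G x)
      = Set.indicator (Icc (-1:ℝ) 1) (fun x => ENNReal.ofReal (G x)) x := by
    intro x
    by_cases h : x ∈ Icc (-1:ℝ) 1 <;> simp [h]
  simp_rw [h1]
  rw [lintegral_indicator measurableSet_Icc]
  rw [← ofReal_integral_eq_lintegral_ofReal (hG.integrableOn_Icc)
    ((ae_restrict_iff' measurableSet_Icc).2 (Filter.Eventually.of_forall hGpos))]
  rw [intervalIntegral.integral_of_le (by norm_num : (-1:ℝ) ≤ 1),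
    ← integral_Icc_eq_integral_Ioc]

lemma int_affine (a b l r : ℝ) : ∫ x in l..r, (a + b*x) = a*(r-l) + b*(r^2-l^2)/2 := by
  rw [intervalIntegral.integral_add (f := fun _ => a) (g := fun x => b * x) (intervalIntegrable_const)
    (((continuous_const.mul continuous_id : Continuous (fun x : ℝ => b * x))).intervalIntegrable l r
      : IntervalIntegrable (fun x => b * x) volume l r)]
  rw [intervalIntegral.integral_const_mul, integral_id, intervalIntegral.integral_const]
  simp only [smul_eq_mul]
  ring

lemma ae_ne_zero : ∀ᵐ x : ℝ, x ≠ 0 := by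
  refine ae_iff.mpr ?_
  simp only [not_not]
  simpa [Set.setOf_eq_eq_singleton] using Real.volume_singleton (a := (0:ℝ))

lemma volT_pos (c : ℝ) (hc0 : 0 < c) (hc1 : c < 1) :
    volume {p : ℝ × ℝ | (p.1 ∈ Icc (-1:ℝ) 1 ∧ p.2 ∈ Icc (-1:ℝ) 1)
        ∧ 0 ≤ (p.2 - c*p.1)*(c*p.2 - p.1)}
      = ENNReal.ofReal (2 + 2*c) := by
  have hcc : c*c < 1 := by nlinarith
  set T : Set (ℝ × ℝ) := {p : ℝ × ℝ | (p.1 ∈ Icc (-1:ℝ) 1 ∧ p.2 ∈ Icc (-1:ℝ) 1)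
        ∧ 0 ≤ (p.2 - c*p.1)*(c*p.2 - p.1)} with hTdef
  have hT : MeasurableSet T := by
    have : T = (Prod.fst ⁻¹' Icc (-1:ℝ) 1) ∩ (Prod.snd ⁻¹' Icc (-1:ℝ) 1) ∩
        {p : ℝ × ℝ | 0 ≤ (p.2 - c*p.1)*(c*p.2 - p.1)} := by
      ext p; simp [hTdef, and_assoc]
    rw [this]
    exact ((measurable_fst measurableSet_Icc).inter (measurable_snd measurableSet_Icc)).inter
      (measurableSet_le measurable_const (by fun_prop))
  set G : ℝ → ℝ := fun x => 1 + c*|x| + max 0 (1 - |x|/c) with hGdef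
  have hGc : Continuous G := by
    apply Continuous.add
    · exact continuous_const.add (continuous_const.mul continuous_abs)
    · exact continuous_const.max (continuous_const.sub (continuous_abs.div_const c))
  have hGpos : ∀ x ∈ Icc (-1:ℝ) 1, 0 ≤ G x := by
    intro x hx
    have h1 : 0 ≤ c * |x| := mul_nonneg hc0.le (abs_nonneg x)
    have h2 : (0:ℝ) ≤ max 0 (1 - |x|/c) := le_max_left _ _
    simp only [hGdef]; linarith
  have hsec : ∀ᵐ x : ℝ, volume (Prod.mk x ⁻¹' T)
      = ENNReal.ofReal (Set.indicator (Icc (-1) 1) G x) := by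
    filter_upwards [ae_ne_zero] with x hx0
    by_cases hmem : x ∈ Icc (-1:ℝ) 1
    · rw [Set.indicator_of_mem hmem]
      obtain ⟨hx1, hx2⟩ := hmem
      rcases hx0.lt_or_gt with hneg | hpos
      · -- x < 0 : section = Icc (-1) (x/c) ∪ Icc (c*x) 1
        have hseteq : Prod.mk x ⁻¹' T = Icc (-1) (x/c) ∪ Icc (c*x) 1 := by
          ext y
          simp only [hTdef, mem_preimage, mem_setOf_eq, mem_Icc, mem_union]
          constructor
          · rintro ⟨⟨-, hy1, hy2⟩, hprod⟩
            rcases le_or_gt y (x/c) with h | h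
            · exact Or.inl ⟨hy1, h⟩
            · refine Or.inr ⟨?_, hy2⟩
              have h2 : 0 < c*y - x := by
                have := (div_lt_iff₀ hc0).mp h
                linarith
              by_contra hcon
              push_neg at hcon
              have h3 : y - c*x < 0 := by linarith
              nlinarith [mul_neg_of_neg_of_pos h3 h2]
          · rintro (⟨h1, h2⟩ | ⟨h1, h2⟩)
            · -- y ≤ x/c : both factors ≤ 0
              have h3 : x ≤ c*x*c := by nlinarith [mul_pos (neg_pos.mpr hneg) (sub_pos.mpr hcc)]
              have hA : y - c*x ≤ 0 := by
                have := (le_div_iff₀ hc0).mp h2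
                nlinarith
              have hB : c*y - x ≤ 0 := by
                have := (le_div_iff₀ hc0).mp h2
                nlinarith
              refine ⟨⟨⟨hx1, hx2⟩, h1, by nlinarith⟩, by nlinarith [mul_nonneg (neg_nonneg.mpr hA) (neg_nonneg.mpr hB)]⟩
            · -- c*x ≤ y : both factors ≥ 0
              have hA : 0 ≤ y - c*x := by linarith
              have h5 : c*(c*x) ≤ c*y := mul_le_mul_of_nonneg_left h1 hc0.le
              have hB : 0 ≤ c*y - x := by nlinarith [mul_pos (neg_pos.mpr hneg) (sub_pos.mpr hcc)]
              have h6 : c*(-1) ≤ c*x := mul_le_mul_of_nonneg_left hx1 hc0.le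
              refine ⟨⟨⟨hx1, hx2⟩, by nlinarith, h2⟩, mul_nonneg hA hB⟩
        rw [hseteq, measure_union ?_ measurableSet_Icc, Real.volume_Icc, Real.volume_Icc]
        · have eabs : |x| = -x := abs_of_neg hneg
          rcases le_or_gt (-1 : ℝ) (x/c) with h | h
          · rw [← ENNReal.ofReal_add (by linarith)
              (by nlinarith [mul_pos hc0 (neg_pos.mpr hneg)])]
            simp only [hGdef, eabs]
            congr 1
            rw [max_eq_right (by
              rw [sub_nonneg, div_le_one hc0]
              have := (le_div_iff₀ hc0).mp h
              linarith)]
            field_simp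
            ring
          · rw [show ENNReal.ofReal (x/c - -1) = 0 from ENNReal.ofReal_eq_zero.mpr (by linarith),
              zero_add]
            simp only [hGdef, eabs]
            congr 1
            rw [max_eq_left (by
              rw [sub_nonpos, le_div_iff₀ hc0]
              have := (div_lt_iff₀ hc0).mp h
              linarith)]
            ring
        · refine Set.disjoint_left.mpr ?_
          rintro y ⟨-, hy1⟩ ⟨hy2, -⟩
          have : x/c < c*x := by
            rw [div_lt_iff₀ hc0]
            nlinarith [mul_pos (neg_pos.mpr hneg) (sub_pos.mpr hcc)]
          linarith
      · -- x > 0 : section = Icc (-1) (c*x) ∪ Icc (x/c) 1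
        have hseteq : Prod.mk x ⁻¹' T = Icc (-1) (c*x) ∪ Icc (x/c) 1 := by
          ext y
          simp only [hTdef, mem_preimage, mem_setOf_eq, mem_Icc, mem_union]
          constructor
          · rintro ⟨⟨-, hy1, hy2⟩, hprod⟩
            rcases le_or_gt y (c*x) with h | h
            · exact Or.inl ⟨hy1, h⟩
            · refine Or.inr ⟨?_, hy2⟩
              have h2 : 0 ≤ c*y - x := by
                by_contra hcon
                push_neg at hcon
                have h3 : 0 < y - c*x := by linarith
                nlinarith [mul_neg_of_pos_of_neg h3 hcon]
              rw [div_le_iff₀ hc0]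
              linarith
          · rintro (⟨h1, h2⟩ | ⟨h1, h2⟩)
            · -- y ≤ c*x : both factors ≤ 0
              have h3 : c*x*c ≤ x := by nlinarith [mul_pos hpos (sub_pos.mpr hcc)]
              have hA : y - c*x ≤ 0 := by linarith
              have h5 : c*y ≤ c*(c*x) := mul_le_mul_of_nonneg_left h2 hc0.le
              have hB : c*y - x ≤ 0 := by nlinarith
              have h6 : c*x ≤ c*1 := mul_le_mul_of_nonneg_left hx2 hc0.le
              refine ⟨⟨⟨hx1, hx2⟩, h1, by nlinarith⟩,
                by nlinarith [mul_nonneg (neg_nonneg.mpr hA) (neg_nonneg.mpr hB)]⟩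
            · -- x/c ≤ y : both factors ≥ 0
              have h4 := (div_le_iff₀ hc0).mp h1
              have h3 : c*x*c ≤ x := by nlinarith [mul_pos hpos (sub_pos.mpr hcc)]
              have hA : 0 ≤ y - c*x := by nlinarith
              have hB : 0 ≤ c*y - x := by nlinarith
              refine ⟨⟨⟨hx1, hx2⟩, by nlinarith, h2⟩, mul_nonneg hA hB⟩
        rw [hseteq, measure_union ?_ measurableSet_Icc, Real.volume_Icc, Real.volume_Icc]
        · have eabs : |x| = x := abs_of_pos hpos
          rcases le_or_gt (x/c) 1 with h | h
          · rw [← ENNReal.ofReal_add (by nlinarith [mul_pos hc0 hpos]) (by linarith)]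
            simp only [hGdef, eabs]
            congr 1
            rw [max_eq_right (by linarith)]
            ring
          · rw [show ENNReal.ofReal (1 - x/c) = 0 from ENNReal.ofReal_eq_zero.mpr (by linarith),
              add_zero]
            simp only [hGdef, eabs]
            congr 1
            rw [max_eq_left (by linarith)]
            ring
        · refine Set.disjoint_left.mpr ?_
          rintro y ⟨-, hy1⟩ ⟨hy2, -⟩
          have : c*x < x/c := by
            rw [lt_div_iff₀ hc0]
            nlinarith [mul_pos hpos (sub_pos.mpr hcc)]
          linarith
    · rw [Set.indicator_of_notMem hmem]
      have : Prod.mk x ⁻¹' T = ∅ := by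
        ext y
        simp only [hTdef, mem_preimage, mem_setOf_eq, mem_empty_iff_false, iff_false]
        rintro ⟨⟨hx, -⟩, -⟩
        exact hmem hx
      simp [this]
  rw [calc_vol T hT G hGc hGpos hsec]
  congr 1
  have hGi : ∀ a b : ℝ, IntervalIntegrable G volume a b := fun a b => hGc.intervalIntegrable a b
  rw [← intervalIntegral.integral_add_adjacent_intervals (hGi (-1) 0) (hGi 0 1),
      ← intervalIntegral.integral_add_adjacent_intervals (hGi (-1) (-c)) (hGi (-c) 0),
      ← intervalIntegral.integral_add_adjacent_intervals (hGi 0 c) (hGi c 1)]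
  have e1 : ∫ x in (-1:ℝ)..(-c), G x = ∫ x in (-1:ℝ)..(-c), (1 + (-c)*x) := by
    refine intervalIntegral.integral_congr fun x hx => ?_
    rw [Set.uIcc_of_le (by linarith)] at hx
    obtain ⟨ha, hb⟩ := hx
    simp only [hGdef]
    rw [abs_of_neg (by linarith), max_eq_left (by rw [sub_nonpos, le_div_iff₀ hc0]; linarith)]
    ring
  have e2 : ∫ x in (-c:ℝ)..0, G x = ∫ x in (-c:ℝ)..0, (2 + (1/c - c)*x) := by
    refine intervalIntegral.integral_congr fun x hx => ?_
    rw [Set.uIcc_of_le (by linarith)] at hx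
    obtain ⟨ha, hb⟩ := hx
    simp only [hGdef]
    rw [abs_of_nonpos hb, max_eq_right (by rw [sub_nonneg, div_le_one hc0]; linarith)]
    field_simp
    ring
  have e3 : ∫ x in (0:ℝ)..c, G x = ∫ x in (0:ℝ)..c, (2 + (c - 1/c)*x) := by
    refine intervalIntegral.integral_congr fun x hx => ?_
    rw [Set.uIcc_of_le (by linarith)] at hx
    obtain ⟨ha, hb⟩ := hx
    simp only [hGdef]
    rw [abs_of_nonneg ha, max_eq_right (by rw [sub_nonneg, div_le_one hc0]; linarith)]
    field_simp
    ring
  have e4 : ∫ x in (c:ℝ)..1, G x = ∫ x in (c:ℝ)..1, (1 + c*x) := by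
    refine intervalIntegral.integral_congr fun x hx => ?_
    rw [Set.uIcc_of_le (by linarith)] at hx
    obtain ⟨ha, hb⟩ := hx
    simp only [hGdef]
    rw [abs_of_nonneg (by linarith), max_eq_left (by rw [sub_nonpos, le_div_iff₀ hc0]; linarith)]
    ring
  rw [e1, e2, e3, e4, int_affine, int_affine, int_affine, int_affine]
  field_simp
  ring

lemma measT (c : ℝ) : MeasurableSet {p : ℝ × ℝ | (p.1 ∈ Icc (-1:ℝ) 1 ∧ p.2 ∈ Icc (-1:ℝ) 1)
        ∧ 0 ≤ (p.2 - c*p.1)*(c*p.2 - p.1)} := by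
  have : {p : ℝ × ℝ | (p.1 ∈ Icc (-1:ℝ) 1 ∧ p.2 ∈ Icc (-1:ℝ) 1)
        ∧ 0 ≤ (p.2 - c*p.1)*(c*p.2 - p.1)}
      = (Prod.fst ⁻¹' Icc (-1:ℝ) 1) ∩ (Prod.snd ⁻¹' Icc (-1:ℝ) 1) ∩
        {p : ℝ × ℝ | 0 ≤ (p.2 - c*p.1)*(c*p.2 - p.1)} := by
    ext p; simp [and_assoc]
  rw [this]
  exact ((measurable_fst measurableSet_Icc).inter (measurable_snd measurableSet_Icc)).inter
    (measurableSet_le measurable_const (by fun_prop))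

lemma volT_zero :
    volume {p : ℝ × ℝ | (p.1 ∈ Icc (-1:ℝ) 1 ∧ p.2 ∈ Icc (-1:ℝ) 1)
        ∧ 0 ≤ (p.2 - (0:ℝ)*p.1)*((0:ℝ)*p.2 - p.1)}
      = ENNReal.ofReal (2 + 2*0) := by
  set T : Set (ℝ × ℝ) := {p : ℝ × ℝ | (p.1 ∈ Icc (-1:ℝ) 1 ∧ p.2 ∈ Icc (-1:ℝ) 1)
        ∧ 0 ≤ (p.2 - (0:ℝ)*p.1)*((0:ℝ)*p.2 - p.1)} with hTdef
  have hsec : ∀ᵐ x : ℝ, volume (Prod.mk x ⁻¹' T)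
      = ENNReal.ofReal (Set.indicator (Icc (-1) 1) (fun _ => (1:ℝ)) x) := by
    filter_upwards [ae_ne_zero] with x hx0
    by_cases hmem : x ∈ Icc (-1:ℝ) 1
    · rw [Set.indicator_of_mem hmem]
      obtain ⟨hx1, hx2⟩ := hmem
      rcases hx0.lt_or_gt with hneg | hpos
      · have hseteq : Prod.mk x ⁻¹' T = Icc 0 1 := by
          ext y
          simp only [hTdef, mem_preimage, mem_setOf_eq, mem_Icc]
          constructor
          · rintro ⟨⟨-, hy1, hy2⟩, hprod⟩
            exact ⟨by nlinarith, hy2⟩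
          · rintro ⟨h1, h2⟩
            exact ⟨⟨⟨hx1, hx2⟩, by linarith, h2⟩, by nlinarith⟩
        rw [hseteq, Real.volume_Icc]
        norm_num
      · have hseteq : Prod.mk x ⁻¹' T = Icc (-1) 0 := by
          ext y
          simp only [hTdef, mem_preimage, mem_setOf_eq, mem_Icc]
          constructor
          · rintro ⟨⟨-, hy1, hy2⟩, hprod⟩
            exact ⟨hy1, by nlinarith⟩
          · rintro ⟨h1, h2⟩
            exact ⟨⟨⟨hx1, hx2⟩, h1, by linarith⟩, by nlinarith⟩
        rw [hseteq, Real.volume_Icc]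
        norm_num
    · rw [Set.indicator_of_notMem hmem]
      have : Prod.mk x ⁻¹' T = ∅ := by
        ext y
        simp only [hTdef, mem_preimage, mem_setOf_eq, mem_empty_iff_false, iff_false]
        rintro ⟨⟨hx, -⟩, -⟩
        exact hmem hx
      simp [this]
  rw [calc_vol T (measT 0) (fun _ => (1:ℝ)) continuous_const (fun x _ => zero_le_one) hsec]
  norm_num

lemma volT_neg (c : ℝ) (hc1 : -1 < c) (hcn : c < 0) :
    volume {p : ℝ × ℝ | (p.1 ∈ Icc (-1:ℝ) 1 ∧ p.2 ∈ Icc (-1:ℝ) 1)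
        ∧ 0 ≤ (p.2 - c*p.1)*(c*p.2 - p.1)}
      = ENNReal.ofReal (2 + 2*c) := by
  have hcc : c*c < 1 := by nlinarith
  have hnc : (0:ℝ) < -c := by linarith
  have hc0 : c ≠ 0 := hcn.ne
  set T : Set (ℝ × ℝ) := {p : ℝ × ℝ | (p.1 ∈ Icc (-1:ℝ) 1 ∧ p.2 ∈ Icc (-1:ℝ) 1)
        ∧ 0 ≤ (p.2 - c*p.1)*(c*p.2 - p.1)} with hTdef
  set G : ℝ → ℝ := fun x => c*|x| + min 1 (|x|/(-c)) with hGdef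
  have hGc : Continuous G :=
    (continuous_const.mul continuous_abs).add
      (continuous_const.min (continuous_abs.div_const (-c)))
  have hGpos : ∀ x ∈ Icc (-1:ℝ) 1, 0 ≤ G x := by
    intro x hx
    rw [mem_Icc] at hx
    have habs : |x| ≤ 1 := abs_le.mpr hx
    simp only [hGdef]
    rcases le_or_gt (|x|/(-c)) 1 with h | h
    · rw [min_eq_right h]
      have h2 : -c*|x| ≤ |x|/(-c) := by
        rw [le_div_iff₀ hnc]
        nlinarith [abs_nonneg x]
      linarith
    · rw [min_eq_left h.le]
      have := mul_le_mul_of_nonpos_left habs hcn.le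
      nlinarith
  have hsec : ∀ᵐ x : ℝ, volume (Prod.mk x ⁻¹' T)
      = ENNReal.ofReal (Set.indicator (Icc (-1) 1) G x) := by
    filter_upwards [ae_ne_zero] with x hx0
    by_cases hmem : x ∈ Icc (-1:ℝ) 1
    · rw [Set.indicator_of_mem hmem]
      obtain ⟨hx1, hx2⟩ := hmem
      have hxc : c*(x/c) = x := by field_simp
      rcases hx0.lt_or_gt with hneg | hpos
      · -- x < 0 : section = Icc (c*x) (min 1 (x/c))
        have hx2c : x ≤ c*x*c := by nlinarith [mul_pos (neg_pos.mpr hneg) (sub_pos.mpr hcc)]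
        have hle : c*x ≤ x/c := by
          rw [le_div_iff_of_neg hcn]
          linarith
        have hseteq : Prod.mk x ⁻¹' T = Icc (c*x) (min 1 (x/c)) := by
          ext y
          simp only [hTdef, mem_preimage, mem_setOf_eq, mem_Icc, le_min_iff]
          constructor
          · rintro ⟨⟨-, hy1, hy2⟩, hprod⟩
            refine ⟨?_, hy2, ?_⟩
            · by_contra hcon
              push_neg at hcon
              have hf1 : y - c*x < 0 := by linarith
              have h5 : c*(c*x) < c*y := mul_lt_mul_of_neg_left hcon hcn
              have hf2 : 0 < c*y - x := by nlinarith
              nlinarith [mul_neg_of_neg_of_pos hf1 hf2]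
            · by_contra hcon
              push_neg at hcon
              have h5 : c*y < c*(x/c) := mul_lt_mul_of_neg_left hcon hcn
              have hf2 : c*y - x < 0 := by rw [hxc] at h5; linarith
              have hf1 : 0 < y - c*x := by linarith
              nlinarith [mul_neg_of_pos_of_neg hf1 hf2]
          · rintro ⟨h1, h2, h3⟩
            have h5 : c*(x/c) ≤ c*y := mul_le_mul_of_nonpos_left h3 hcn.le
            rw [hxc] at h5
            have hcxpos : 0 < c*x := mul_pos_of_neg_of_neg hcn hneg
            exact ⟨⟨⟨hx1, hx2⟩, by linarith, h2⟩,
              mul_nonneg (by linarith) (by linarith)⟩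
        rw [hseteq, Real.volume_Icc]
        simp only [hGdef]
        congr 1
        rw [abs_of_neg hneg, neg_div_neg_eq]
        ring
      · -- x > 0 : section = Icc (max (-1) (x/c)) (c*x)
        have hx2c : c*x*c ≤ x := by nlinarith [mul_pos hpos (sub_pos.mpr hcc)]
        have hle : x/c ≤ c*x := by
          rw [div_le_iff_of_neg hcn]
          linarith
        have hseteq : Prod.mk x ⁻¹' T = Icc (max (-1) (x/c)) (c*x) := by
          ext y
          simp only [hTdef, mem_preimage, mem_setOf_eq, mem_Icc, max_le_iff]
          constructor
          · rintro ⟨⟨-, hy1, hy2⟩, hprod⟩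
            refine ⟨⟨hy1, ?_⟩, ?_⟩
            · by_contra hcon
              push_neg at hcon
              have h5 : c*(x/c) < c*y := mul_lt_mul_of_neg_left hcon hcn
              have hf2 : 0 < c*y - x := by rw [hxc] at h5; linarith
              have hf1 : y - c*x < 0 := by linarith
              nlinarith [mul_neg_of_neg_of_pos hf1 hf2]
            · by_contra hcon
              push_neg at hcon
              have hf1 : 0 < y - c*x := by linarith
              have h5 : c*y < c*(c*x) := mul_lt_mul_of_neg_left hcon hcn
              have hf2 : c*y - x < 0 := by nlinarith
              nlinarith [mul_neg_of_pos_of_neg hf1 hf2]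
          · rintro ⟨⟨h1, h2⟩, h3⟩
            have h5 : c*y ≤ c*(x/c) := mul_le_mul_of_nonpos_left h2 hcn.le
            rw [hxc] at h5
            have hcxneg : c*x < 0 := mul_neg_of_neg_of_pos hcn hpos
            refine ⟨⟨⟨hx1, hx2⟩, h1, by linarith⟩, ?_⟩
            have hf1 : y - c*x ≤ 0 := by linarith
            have hf2 : c*y - x ≤ 0 := by linarith
            nlinarith [mul_nonneg (neg_nonneg.mpr hf1) (neg_nonneg.mpr hf2)]
        rw [hseteq, Real.volume_Icc]
        simp only [hGdef]
        congr 1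
        rw [abs_of_pos hpos]
        rcases le_total (-1 : ℝ) (x/c) with h | h
        · have h5 : x ≤ -c := by
            have := (le_div_iff_of_neg hcn).mp h
            linarith
          rw [max_eq_right h, min_eq_right (by rw [div_le_one hnc]; linarith), div_neg]
          ring
        · have h5 : -c ≤ x := by
            have := (div_le_iff_of_neg hcn).mp h
            linarith
          rw [max_eq_left h, min_eq_left (by rw [le_div_iff₀ hnc]; linarith)]
          ring
    · rw [Set.indicator_of_notMem hmem]
      have : Prod.mk x ⁻¹' T = ∅ := by
        ext y
        simp only [hTdef, mem_preimage, mem_setOf_eq, mem_empty_iff_false, iff_false]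
        rintro ⟨⟨hx, -⟩, -⟩
        exact hmem hx
      simp [this]
  rw [calc_vol T (measT c) G hGc hGpos hsec]
  congr 1
  have hGi : ∀ a b : ℝ, IntervalIntegrable G volume a b := fun a b => hGc.intervalIntegrable a b
  rw [← intervalIntegral.integral_add_adjacent_intervals (hGi (-1) 0) (hGi 0 1),
      ← intervalIntegral.integral_add_adjacent_intervals (hGi (-1) c) (hGi c 0),
      ← intervalIntegral.integral_add_adjacent_intervals (hGi 0 (-c)) (hGi (-c) 1)]
  have e1 : ∫ x in (-1:ℝ)..c, G x = ∫ x in (-1:ℝ)..c, (1 + (-c)*x) := by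
    refine intervalIntegral.integral_congr fun x hx => ?_
    rw [Set.uIcc_of_le (by linarith)] at hx
    obtain ⟨ha, hb⟩ := hx
    simp only [hGdef]
    rw [abs_of_neg (by linarith), min_eq_left (by rw [le_div_iff₀ hnc]; linarith)]
    ring
  have e2 : ∫ x in (c:ℝ)..0, G x = ∫ x in (c:ℝ)..0, (0 + (1/c - c)*x) := by
    refine intervalIntegral.integral_congr fun x hx => ?_
    rw [Set.uIcc_of_le (by linarith)] at hx
    obtain ⟨ha, hb⟩ := hx
    simp only [hGdef]
    rw [abs_of_nonpos hb, min_eq_right (by rw [div_le_one hnc]; linarith), neg_div_neg_eq]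
    field_simp
    ring
  have e3 : ∫ x in (0:ℝ)..(-c), G x = ∫ x in (0:ℝ)..(-c), (0 + (c - 1/c)*x) := by
    refine intervalIntegral.integral_congr fun x hx => ?_
    rw [Set.uIcc_of_le (by linarith)] at hx
    obtain ⟨ha, hb⟩ := hx
    simp only [hGdef]
    rw [abs_of_nonneg ha, min_eq_right (by rw [div_le_one hnc]; linarith), div_neg]
    field_simp
    ring
  have e4 : ∫ x in (-c:ℝ)..1, G x = ∫ x in (-c:ℝ)..1, (1 + c*x) := by
    refine intervalIntegral.integral_congr fun x hx => ?_
    rw [Set.uIcc_of_le (by linarith)] at hx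
    obtain ⟨ha, hb⟩ := hx
    simp only [hGdef]
    rw [abs_of_nonneg (by linarith), min_eq_left (by rw [le_div_iff₀ hnc]; linarith)]
    ring
  rw [e1, e2, e3, e4, int_affine, int_affine, int_affine, int_affine]
  field_simp
  ring

lemma key (θ k : ℝ) (hk : 0 < k) :
    joint θ {p : ℝ × ℝ | |(p.1 + p.2)/2 - θ| ≤ k * |p.2 - p.1|}
      = ENNReal.ofReal (1 - 1/(1 + 2*k)) := by
  have hkp : (0:ℝ) < 2*k+1 := by linarith
  set c : ℝ := (2*k-1)/(2*k+1) with hc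
  have hc1 : c < 1 := by rw [hc, div_lt_one hkp]; linarith
  have hcm : -1 < c := by rw [hc, lt_div_iff₀ hkp]; linarith
  set S : Set (ℝ × ℝ) := {p : ℝ × ℝ | |(p.1 + p.2)/2 - θ| ≤ k * |p.2 - p.1|} with hSdef
  have hS : MeasurableSet S := by
    apply measurableSet_le
    · exact (((measurable_fst.add measurable_snd).div_const 2).sub measurable_const).abs
    · exact (measurable_snd.sub measurable_fst).abs.const_mul k
  -- step A : reduce to Lebesgue volume on the square
  have stepA : joint θ S = (ENNReal.ofReal 2)⁻¹ * (ENNReal.ofReal 2)⁻¹ *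
      (volume : Measure (ℝ × ℝ)) (S ∩ (Icc (θ-1) (θ+1) ×ˢ Icc (θ-1) (θ+1))) := by
    rw [joint, unifIcc]
    have h2 : ENNReal.ofReal ((θ+1) - (θ-1)) = ENNReal.ofReal 2 := by norm_num
    rw [h2]
    rw [Measure.prod_apply hS, lintegral_smul_measure]
    simp only [Measure.smul_apply, smul_eq_mul]
    rw [lintegral_const_mul' _ _ (by simp : (ENNReal.ofReal 2)⁻¹ ≠ ⊤)]
    rw [← Measure.prod_apply hS, Measure.prod_restrict, ← Measure.volume_eq_prod,
      Measure.restrict_apply' (measurableSet_Icc.prod measurableSet_Icc)]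
    ring
  -- pointwise characterization
  have hpt : ∀ x y : ℝ, (|(x + y)/2| ≤ k * |y - x|) ↔ 0 ≤ (y - c*x)*(c*y - x) := by
    intro x y
    have hid : (2*k+1)^2 * ((y - c*x)*(c*y - x)) = (2*k*(y-x))^2 - (x+y)^2 := by
      rw [hc]; field_simp; ring
    constructor
    · intro h
      have h1 : ((x+y)/2)^2 ≤ (k * |y-x|)^2 := by
        have := abs_nonneg ((x+y)/2)
        nlinarith [sq_abs ((x+y)/2)]
      have h2 : (x+y)^2 ≤ (2*k*(y-x))^2 := by nlinarith [sq_abs (y-x)]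
      nlinarith [mul_pos hkp hkp]
    · intro h
      have h2 : (x+y)^2 ≤ (2*k*(y-x))^2 := by nlinarith [mul_pos hkp hkp]
      have h3 : (0:ℝ) ≤ k * |y-x| := by positivity
      rw [abs_le]
      constructor <;> nlinarith [sq_abs (y-x), abs_nonneg (y-x)]
  -- step B : translate by (θ, θ)
  have stepB : (volume : Measure (ℝ × ℝ)) (S ∩ (Icc (θ-1) (θ+1) ×ˢ Icc (θ-1) (θ+1)))
      = (volume : Measure (ℝ × ℝ)) {p : ℝ × ℝ | (p.1 ∈ Icc (-1:ℝ) 1 ∧ p.2 ∈ Icc (-1:ℝ) 1)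
          ∧ 0 ≤ (p.2 - c*p.1)*(c*p.2 - p.1)} := by
    rw [← measure_preimage_add volume ((θ, θ) : ℝ × ℝ)
      (S ∩ (Icc (θ-1) (θ+1) ×ˢ Icc (θ-1) (θ+1)))]
    congr 1
    ext p
    obtain ⟨x, y⟩ := p
    simp only [hSdef, mem_preimage, mem_inter_iff, mem_setOf_eq, mem_prod, mem_Icc,
      Prod.fst_add, Prod.snd_add, Prod.fst, Prod.snd]
    constructor
    · rintro ⟨h1, ⟨h2, h3⟩, h4, h5⟩
      refine ⟨⟨⟨by linarith, by linarith⟩, by linarith, by linarith⟩, ?_⟩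
      rw [← hpt x y]
      have e1 : (θ + x + (θ + y))/2 - θ = (x+y)/2 := by ring
      have e2 : (θ + y) - (θ + x) = y - x := by ring
      rw [e1, e2] at h1
      exact h1
    · rintro ⟨⟨⟨h2, h3⟩, h4, h5⟩, h1⟩
      rw [← hpt x y] at h1
      refine ⟨?_, ⟨by linarith, by linarith⟩, by linarith, by linarith⟩
      have e1 : (θ + x + (θ + y))/2 - θ = (x+y)/2 := by ring
      have e2 : (θ + y) - (θ + x) = y - x := by ring
      rw [e1, e2]
      exact h1
  -- step C : compute the volume
  have stepC : (volume : Measure (ℝ × ℝ)) {p : ℝ × ℝ | (p.1 ∈ Icc (-1:ℝ) 1 ∧ p.2 ∈ Icc (-1:ℝ) 1)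
          ∧ 0 ≤ (p.2 - c*p.1)*(c*p.2 - p.1)} = ENNReal.ofReal (2 + 2*c) := by
    rcases lt_trichotomy c 0 with h | h | h
    · exact volT_neg c hcm h
    · rw [h]; exact volT_zero
    · exact volT_pos c h hc1
  rw [stepA, stepB, stepC]
  have harith : 2 + 2*c = 4 * (1 - 1/(1 + 2*k)) := by
    rw [hc]
    field_simp
    ring
  rw [harith, ENNReal.ofReal_mul (by norm_num : (0:ℝ) ≤ 4)]
  have h2 : ENNReal.ofReal (2:ℝ) = 2 := by norm_num
  have h4 : ENNReal.ofReal (4:ℝ) = 4 := by norm_num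
  rw [h2, h4, ← mul_assoc]
  have : (2:ℝ≥0∞)⁻¹ * 2⁻¹ * 4 = 1 := by
    rw [← ENNReal.mul_inv (Or.inl (by norm_num)) (Or.inl (by norm_num))]
    norm_num
    rw [ENNReal.inv_mul_cancel (by norm_num) (by norm_num)]
  rw [this, one_mul]

theorem stmt6 (θ k : ℝ) (hk : 0 < k) :
    joint θ {p : ℝ × ℝ | |(p.1 + p.2)/2 - θ| ≤ k * |p.2 - p.1|}
      = ENNReal.ofReal (1 - 1/(1 + 2*k)) ∧
    ∀ α : ℝ, 0 < α → α < 1 →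
      joint θ {p : ℝ × ℝ | |(p.1 + p.2)/2 - θ| ≤ ((1-α)/(2*α)) * |p.2 - p.1|}
        = ENNReal.ofReal (1 - α) := by
  refine ⟨key θ k hk, fun α h0 h1 => ?_⟩
  have hk' : 0 < (1-α)/(2*α) := div_pos (by linarith) (by linarith)
  rw [key θ _ hk']
  congr 1
  have hα : α ≠ 0 := ne_of_gt h0
  have h' : 1 + 2*((1-α)/(2*α)) = 1/α := by
    field_simp
    ring
  rw [h', one_div_one_div]
end

section
/- Let X1, X2 be i.i.d. uniform on [θ−1, θ+1], M = (X1+X2)/2, V = X2−X1. For 0 < α < 1/2 and k_α = 1−√(2α), the interval M ± min(|V|/2 + k_α, 1−|V|/2) has coverage probability exactly 1−α. -/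
open MeasureTheory ProbabilityTheory Set

lemma smul_prod_smul (c d : ENNReal) (μ ν : Measure ℝ)
    [IsFiniteMeasure μ] [IsFiniteMeasure ν] (hc : c ≠ ⊤) (hd : d ≠ ⊤) :
    (c • μ).prod (d • ν) = (c * d) • (μ.prod ν) := by
  haveI : IsFiniteMeasure (d • ν) := by
    constructor
    simp only [Measure.smul_apply, smul_eq_mul]
    exact ENNReal.mul_lt_top hd.lt_top (measure_lt_top ν univ)
  haveI : IsFiniteMeasure (c • μ) := by
    constructor
    simp only [Measure.smul_apply, smul_eq_mul]
    exact ENNReal.mul_lt_top hc.lt_top (measure_lt_top μ univ)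
  refine (Measure.prod_eq (μ := c • μ) (ν := d • ν) (μν := (c * d) • μ.prod ν) fun s t hs ht => ?_)
  simp only [Measure.smul_apply, smul_eq_mul, Measure.prod_prod]
  ring

lemma key_s7 (k θ x y : ℝ) (hk0 : 0 < k) (hx1 : θ - 1 ≤ x) (hx2 : x ≤ θ + 1)
    (hy1 : θ - 1 ≤ y) (hy2 : y ≤ θ + 1) :
    |(x + y)/2 - θ| ≤ min (|y - x|/2 + k) (1 - |y - x|/2) ↔
      ¬((θ + k < x ∧ θ + k < y) ∨ (x < θ - k ∧ y < θ - k)) := by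
  rw [le_min_iff, abs_le, abs_le]
  rcases abs_cases (y - x) with ⟨h, hsgn⟩ | ⟨h, hsgn⟩ <;> rw [h] <;> constructor <;> intro H
  · push_neg
    constructor <;> intro hh <;> linarith [H.1.1, H.1.2]
  · push_neg at H
    obtain ⟨c1, c2⟩ := H
    rcases le_or_gt x (θ + k) with h1 | h1
    · rcases le_or_gt (θ - k) x with h2 | h2
      · exact ⟨⟨by linarith, by linarith⟩, by linarith, by linarith⟩
      · have hv := c2 h2
        exact ⟨⟨by linarith, by linarith⟩, by linarith, by linarith⟩
    · have hv := c1 h1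
      exact ⟨⟨by linarith, by linarith⟩, by linarith, by linarith⟩
  · push_neg
    constructor <;> intro hh <;> linarith [H.1.1, H.1.2]
  · push_neg at H
    obtain ⟨c1, c2⟩ := H
    rcases le_or_gt x (θ + k) with h1 | h1
    · rcases le_or_gt (θ - k) x with h2 | h2
      · exact ⟨⟨by linarith, by linarith⟩, by linarith, by linarith⟩
      · have hv := c2 h2
        exact ⟨⟨by linarith, by linarith⟩, by linarith, by linarith⟩
    · have hv := c1 h1
      exact ⟨⟨by linarith, by linarith⟩, by linarith, by linarith⟩

theorem stmt7 (θ α : ℝ) (hα0 : 0 < α) (hα1 : α < 1/2) :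
    joint θ {p : ℝ × ℝ |
        |(p.1 + p.2)/2 - θ| ≤ min (|p.2 - p.1|/2 + (1 - Real.sqrt (2*α))) (1 - |p.2 - p.1|/2)}
      = ENNReal.ofReal (1 - α) := by
  set s : ℝ := Real.sqrt (2*α) with hs
  have hs0 : 0 < s := Real.sqrt_pos.2 (by linarith)
  have hs1 : s < 1 := by
    rw [hs, show (1:ℝ) = Real.sqrt 1 by simp]
    exact Real.sqrt_lt_sqrt (by linarith) (by linarith)
  have hssq : s * s = 2 * α := Real.mul_self_sqrt (by linarith)
  set k : ℝ := 1 - s with hk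
  have hk0 : 0 < k := by simp only [hk]; linarith
  have hk1 : k < 1 := by simp only [hk]; linarith
  set I : Set ℝ := Icc (θ-1) (θ+1) with hI
  set B1 : Set (ℝ × ℝ) := Ioc (θ+k) (θ+1) ×ˢ Ioc (θ+k) (θ+1) with hB1
  set B2 : Set (ℝ × ℝ) := Ico (θ-1) (θ-k) ×ˢ Ico (θ-1) (θ-k) with hB2
  set A : Set (ℝ × ℝ) := {p : ℝ × ℝ |
      |(p.1 + p.2)/2 - θ| ≤ min (|p.2 - p.1|/2 + (1 - Real.sqrt (2*α))) (1 - |p.2 - p.1|/2)}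
    with hA
  have hset : A ∩ I ×ˢ I = (I ×ˢ I) \ (B1 ∪ B2) := by
    ext ⟨x, y⟩
    simp only [hA, hI, hB1, hB2, mem_inter_iff, mem_setOf_eq, mem_prod, mem_Icc, mem_diff,
      mem_union, mem_Ioc, mem_Ico]
    have hkey : ∀ hx1 : θ - 1 ≤ x, ∀ hx2 : x ≤ θ + 1, ∀ hy1 : θ - 1 ≤ y, ∀ hy2 : y ≤ θ + 1,
        (|(x + y)/2 - θ| ≤ min (|y - x|/2 + k) (1 - |y - x|/2) ↔
          ¬((θ + k < x ∧ θ + k < y) ∨ (x < θ - k ∧ y < θ - k))) :=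
      fun hx1 hx2 hy1 hy2 => key_s7 k θ x y hk0 hx1 hx2 hy1 hy2
    constructor
    · rintro ⟨hc, hsq⟩
      refine ⟨hsq, ?_⟩
      have := (hkey hsq.1.1 hsq.1.2 hsq.2.1 hsq.2.2).1 (by rw [hk]; exact hc)
      tauto
    · rintro ⟨hsq, hn⟩
      refine ⟨?_, hsq⟩
      have := (hkey hsq.1.1 hsq.1.2 hsq.2.1 hsq.2.2).2 (by tauto)
      rw [hk] at this
      exact this
  haveI hfin : IsFiniteMeasure (volume.restrict I) := by
    constructor
    rw [Measure.restrict_apply_univ, hI, Real.volume_Icc]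
    exact ENNReal.ofReal_lt_top
  have hjoint : joint θ A =
      ((ENNReal.ofReal 2)⁻¹ * (ENNReal.ofReal 2)⁻¹) *
        ((volume.restrict I).prod (volume.restrict I)) A := by
    have h2 : θ + 1 - (θ - 1) = 2 := by ring
    rw [joint, unifIcc, h2, ← hI, smul_prod_smul _ _ _ _
      (ENNReal.inv_ne_top.2 (by norm_num)) (ENNReal.inv_ne_top.2 (by norm_num)),
      Measure.smul_apply, smul_eq_mul]
  rw [hjoint, Measure.prod_restrict,
    Measure.restrict_apply' (measurableSet_Icc.prod measurableSet_Icc), hset]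
  have hB1m : MeasurableSet B1 := measurableSet_Ioc.prod measurableSet_Ioc
  have hB2m : MeasurableSet B2 := measurableSet_Ico.prod measurableSet_Ico
  have hdisj : Disjoint B1 B2 := by
    rw [Set.disjoint_left]
    rintro ⟨x, y⟩ h1 h2
    simp only [hB1, hB2, mem_prod, mem_Ioc, mem_Ico] at h1 h2
    linarith [h1.1.1, h2.1.2]
  have hB1v : (volume.prod volume) B1 = ENNReal.ofReal (2*α) := by
    rw [hB1, Measure.prod_prod, Real.volume_Ioc,
      show θ + 1 - (θ + k) = s by rw [hk]; ring, ← ENNReal.ofReal_mul hs0.le, hssq]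
  have hB2v : (volume.prod volume) B2 = ENNReal.ofReal (2*α) := by
    rw [hB2, Measure.prod_prod, Real.volume_Ico,
      show θ - k - (θ - 1) = s by rw [hk]; ring, ← ENNReal.ofReal_mul hs0.le, hssq]
  have hBv : (volume.prod volume) (B1 ∪ B2) = ENNReal.ofReal (4*α) := by
    rw [measure_union hdisj hB2m, hB1v, hB2v, ← ENNReal.ofReal_add (by linarith) (by linarith)]
    congr 1
    ring
  have hsub : B1 ∪ B2 ⊆ I ×ˢ I := by
    rintro ⟨x, y⟩ (h | h) <;>
      simp only [hB1, hB2, mem_prod, mem_Ioc, mem_Ico] at h <;>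
      simp only [hI, mem_prod, mem_Icc] <;>
      exact ⟨⟨by linarith [h.1.1, h.1.2], by linarith [h.1.1, h.1.2]⟩,
        ⟨by linarith [h.2.1, h.2.2], by linarith [h.2.1, h.2.2]⟩⟩
  rw [measure_diff hsub ((hB1m.union hB2m).nullMeasurableSet)
    (by rw [hBv]; exact ENNReal.ofReal_ne_top), hBv]
  have hsqv : (volume.prod volume) (I ×ˢ I) = ENNReal.ofReal 4 := by
    rw [Measure.prod_prod, hI, Real.volume_Icc, show θ + 1 - (θ - 1) = 2 by ring,
      ← ENNReal.ofReal_mul (by norm_num)]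
    norm_num
  rw [hsqv, ← ENNReal.ofReal_sub _ (by linarith),
    ← ENNReal.ofReal_inv_of_pos (by norm_num : (0:ℝ) < 2),
    ← ENNReal.ofReal_mul (by norm_num), ← ENNReal.ofReal_mul (by positivity)]
  norm_num
  ring_nf
  rw [← ENNReal.ofReal_mul (by norm_num)]; congr 1; ring
end

section
/- Let X1, X2 be i.i.d. uniform on [θ−1, θ+1], M = (X1+X2)/2, V = X2−X1. For 0 < α < 1, the interval M ± (1−α)(1−|V|/2) has coverage probability exactly 1−α. -/
open MeasureTheory ProbabilityTheory Set

private lemma lin_int (p q a b : ℝ) :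
    ∫ u in a..b, (p - q * u) = p * (b - a) - q * (b^2 - a^2) / 2 := by
  have hq : IntervalIntegrable (fun u : ℝ => q * u) volume a b :=
    ((by fun_prop : Continuous fun u : ℝ => q * u)).intervalIntegrable _ _
  rw [intervalIntegral.integral_sub ((continuous_const (y := p)).intervalIntegrable _ _) hq]
  rw [intervalIntegral.integral_const, intervalIntegral.integral_const_mul, integral_id]
  simp [smul_eq_mul]; ring

theorem stmt8 (θ α : ℝ) (hα0 : 0 < α) (hα1 : α < 1) :
    joint θ {p : ℝ × ℝ | |(p.1 + p.2)/2 - θ| ≤ (1 - α) * (1 - |p.2 - p.1|/2)}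
      = ENNReal.ofReal (1 - α) := by
  obtain ⟨c, hcdef⟩ : ∃ c : ℝ, c = 1 - α := ⟨_, rfl⟩
  rw [← hcdef]
  have hc0 : 0 < c := by rw [hcdef]; linarith
  have hc1 : c < 1 := by rw [hcdef]; linarith
  have h1c : (0:ℝ) < 1 + c := by linarith
  have h1c' : (0:ℝ) < 1 - c := by linarith
  obtain ⟨A, hA⟩ : ∃ A : ℝ → ℝ, A = fun u => (2*c - (1-c)*u)/(1+c) := ⟨_, rfl⟩
  obtain ⟨B, hB⟩ : ∃ B : ℝ → ℝ, B = fun u => (2*c - (1+c)*u)/(1-c) := ⟨_, rfl⟩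
  obtain ⟨m, hm⟩ : ∃ m : ℝ → ℝ, m = fun u => min (A u) (B u) := ⟨_, rfl⟩
  set S : Set (ℝ × ℝ) := {p : ℝ × ℝ | |(p.1 + p.2)/2 - θ| ≤ c * (1 - |p.2 - p.1|/2)} with hSdef
  set I : Set ℝ := Icc (θ-1) (θ+1) with hI
  have hImeas : MeasurableSet I := measurableSet_Icc
  have hS : MeasurableSet S := by
    apply measurableSet_le <;> fun_prop
  have hAle : ∀ t y' : ℝ, y' ≤ A t ↔ y' * (1+c) ≤ 2*c - (1-c)*t := by
    intro t y'; simp only [hA]; exact le_div_iff₀ h1c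
  have hBle : ∀ t y' : ℝ, y' ≤ B t ↔ y' * (1-c) ≤ 2*c - (1+c)*t := by
    intro t y'; simp only [hB]; exact le_div_iff₀ h1c'
  -- slice lemma
  have hslice : ∀ x ∈ I, (Prod.mk x ⁻¹' S) ∩ I = Icc (θ - m (θ - x)) (θ + m (x - θ)) := by
    intro x hx
    rw [hI, mem_Icc] at hx
    obtain ⟨hx1, hx2⟩ := hx
    have hA1 : A (x - θ) ≤ 1 := by
      simp only [hA]; rw [div_le_one h1c]; nlinarith
    have hA1' : A (θ - x) ≤ 1 := by
      simp only [hA]; rw [div_le_one h1c]; nlinarith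
    ext y
    simp only [hSdef, hI, mem_inter_iff, mem_preimage, mem_setOf_eq, mem_Icc]
    constructor
    · rintro ⟨hcond, hy1, hy2⟩
      have key4 : (y - θ) * (1+c) ≤ 2*c - (1-c)*(x-θ) ∧ (y - θ) * (1-c) ≤ 2*c - (1+c)*(x-θ)
          ∧ (θ - y) * (1+c) ≤ 2*c - (1-c)*(θ-x) ∧ (θ - y) * (1-c) ≤ 2*c - (1+c)*(θ-x) := by
        rcases le_total x y with hxy|hxy
        · rw [show |y - x| = y - x from abs_of_nonneg (by linarith), abs_le] at hcond
          obtain ⟨hl, hr⟩ := hcond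
          have hp : 0 ≤ c * (y - x) := mul_nonneg hc0.le (by linarith)
          refine ⟨by linarith, by linarith, by linarith, by linarith⟩
        · rw [show |y - x| = -(y - x) from abs_of_nonpos (by linarith), abs_le] at hcond
          obtain ⟨hl, hr⟩ := hcond
          have hp : 0 ≤ c * (x - y) := mul_nonneg hc0.le (by linarith)
          refine ⟨by linarith, by linarith, by linarith, by linarith⟩
      obtain ⟨k1, k2, k3, k4⟩ := key4
      constructor
      · rw [sub_le_iff_le_add, ← sub_le_iff_le_add']
        simp only [hm]
        rw [le_min_iff, hAle, hBle]
        exact ⟨k3, k4⟩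
      · rw [← sub_le_iff_le_add']
        simp only [hm]
        rw [le_min_iff, hAle, hBle]
        exact ⟨k1, k2⟩
    · rintro ⟨hy1, hy2⟩
      rw [sub_le_iff_le_add, ← sub_le_iff_le_add'] at hy1
      rw [← sub_le_iff_le_add'] at hy2
      simp only [hm] at hy1 hy2
      rw [le_min_iff, hAle, hBle] at hy1 hy2
      obtain ⟨k3, k4⟩ := hy1
      obtain ⟨k1, k2⟩ := hy2
      have hyA : y - θ ≤ A (x - θ) := (hAle _ _).2 k1
      have hyA' : θ - y ≤ A (θ - x) := (hAle _ _).2 k3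
      refine ⟨?_, by linarith, by linarith⟩
      rcases le_total x y with hxy|hxy
      · rw [show |y - x| = y - x from abs_of_nonneg (by linarith), abs_le]
        constructor <;> linarith
      · rw [show |y - x| = -(y - x) from abs_of_nonpos (by linarith), abs_le]
        constructor <;> linarith
  -- continuity of m
  have hmc : Continuous m := by
    rw [hm, hA, hB]; apply Continuous.min <;> fun_prop
  -- nonneg of sum
  have hnn : ∀ x ∈ I, 0 ≤ m (x - θ) + m (θ - x) := by
    intro x hx
    rw [hI, mem_Icc] at hx
    obtain ⟨hx1, hx2⟩ := hx
    simp only [hm]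
    have case1 : 0 ≤ A (x-θ) + A (θ-x) := by
      simp only [hA]; rw [← add_div]; apply div_nonneg
      · nlinarith
      · linarith
    have case2 : 0 ≤ A (x-θ) + B (θ-x) := by
      simp only [hA, hB]; rw [div_add_div _ _ (ne_of_gt h1c) (ne_of_gt h1c')]
      apply div_nonneg
      · nlinarith [mul_nonneg hc0.le (by linarith : (0:ℝ) ≤ x - θ + 1)]
      · nlinarith
    have case3 : 0 ≤ B (x-θ) + A (θ-x) := by
      simp only [hA, hB]; rw [div_add_div _ _ (ne_of_gt h1c') (ne_of_gt h1c)]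
      apply div_nonneg
      · nlinarith [mul_nonneg hc0.le (by linarith : (0:ℝ) ≤ θ - x + 1)]
      · nlinarith
    have case4 : 0 ≤ B (x-θ) + B (θ-x) := by
      simp only [hB]; rw [← add_div]; apply div_nonneg
      · nlinarith
      · linarith
    rcases min_cases (A (x-θ)) (B (x-θ)) with ⟨h1, -⟩|⟨h1, -⟩ <;>
      rcases min_cases (A (θ-x)) (B (θ-x)) with ⟨h2, -⟩|⟨h2, -⟩ <;>
      rw [h1, h2] <;> assumption
  haveI hSF : SFinite (unifIcc (θ-1) (θ+1)) := by unfold unifIcc; infer_instance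
  have h2 : ((θ:ℝ)+1) - (θ-1) = 2 := by ring
  -- the real integral
  have hreal : ∫ x in I, (m (x - θ) + m (θ - x)) = 4 * c := by
    rw [hI, integral_Icc_eq_integral_Ioc,
      ← intervalIntegral.integral_of_le (by linarith : θ-1 ≤ θ+1)]
    have i1 : IntervalIntegrable (fun x => m (x - θ)) volume (θ-1) (θ+1) :=
      (hmc.comp (continuous_id.sub continuous_const)).intervalIntegrable _ _
    have i2 : IntervalIntegrable (fun x => m (θ - x)) volume (θ-1) (θ+1) :=
      (hmc.comp (continuous_const.sub continuous_id)).intervalIntegrable _ _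
    rw [intervalIntegral.integral_add i1 i2]
    rw [intervalIntegral.integral_comp_sub_right (fun u => m u) θ]
    rw [intervalIntegral.integral_comp_sub_left (fun u => m u) θ]
    rw [show θ - 1 - θ = (-1 : ℝ) by ring, show θ + 1 - θ = (1:ℝ) by ring,
      show θ - (θ+1) = (-1:ℝ) by ring, show θ - (θ-1) = (1:ℝ) by ring]
    have hmint : ∫ u in (-1:ℝ)..1, m u = 2 * c := by
      have iA : IntervalIntegrable m volume (-1) c := hmc.intervalIntegrable _ _
      have iB : IntervalIntegrable m volume c 1 := hmc.intervalIntegrable _ _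
      rw [← intervalIntegral.integral_add_adjacent_intervals iA iB]
      have e1 : ∫ u in (-1:ℝ)..c, m u
          = ∫ u in (-1:ℝ)..c, ((2*c/(1+c)) - ((1-c)/(1+c)) * u) := by
        apply intervalIntegral.integral_congr
        intro u hu
        rw [uIcc_of_le (by linarith), mem_Icc] at hu
        simp only [hm]
        rw [min_eq_left]
        · simp only [hA]; field_simp
        · simp only [hA, hB]
          rw [div_le_div_iff₀ h1c h1c']
          nlinarith [hu.2]
      have e2 : ∫ u in c..(1:ℝ), m u
          = ∫ u in c..(1:ℝ), ((2*c/(1-c)) - ((1+c)/(1-c)) * u) := by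
        apply intervalIntegral.integral_congr
        intro u hu
        rw [uIcc_of_le (by linarith), mem_Icc] at hu
        simp only [hm]
        rw [min_eq_right]
        · simp only [hB]; field_simp
        · simp only [hA, hB]
          rw [div_le_div_iff₀ h1c' h1c]
          nlinarith [hu.1]
      rw [e1, e2, lin_int, lin_int]
      field_simp
      ring
    rw [hmint]; ring
  -- measure computation
  rw [show joint θ S = ENNReal.ofReal c from ?_]
  rw [joint, Measure.prod_apply hS]
  have hsl : ∀ x, unifIcc (θ-1) (θ+1) (Prod.mk x ⁻¹' S)
      = (ENNReal.ofReal 2)⁻¹ * volume ((Prod.mk x ⁻¹' S) ∩ I) := by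
    intro x
    rw [unifIcc, h2, Measure.smul_apply, smul_eq_mul,
      Measure.restrict_apply (measurable_prodMk_left hS)]
  simp only [hsl]
  rw [unifIcc, h2, lintegral_smul_measure]
  rw [lintegral_const_mul' _ _ (by simp)]
  have hL : ∫⁻ x in I, volume (Prod.mk x ⁻¹' S ∩ I) = ENNReal.ofReal (4*c) := by
    have e1 : ∫⁻ x in I, volume (Prod.mk x ⁻¹' S ∩ I)
        = ∫⁻ x in I, ENNReal.ofReal (m (x - θ) + m (θ - x)) := by
      apply setLIntegral_congr_fun hImeas
      intro x hx
      beta_reduce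
      rw [hslice x hx, Real.volume_Icc]
      congr 1; ring
    rw [e1, ← ofReal_integral_eq_lintegral_ofReal ?_ ?_]
    · rw [hreal]
    · exact ((hmc.comp (continuous_id.sub continuous_const)).add
        (hmc.comp (continuous_const.sub continuous_id))).integrableOn_Icc
    · exact (ae_restrict_iff' hImeas).2 (ae_of_all _ hnn)
  rw [hL, show (4:ℝ)*c = 2*(2*c) by ring,
    ENNReal.ofReal_mul (by norm_num), ENNReal.ofReal_mul (by norm_num : (0:ℝ) ≤ 2)]
  rw [← mul_assoc (ENNReal.ofReal 2)⁻¹ (ENNReal.ofReal 2) (ENNReal.ofReal 2 * ENNReal.ofReal c),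
    ENNReal.inv_mul_cancel (by simp) ENNReal.ofReal_ne_top, one_mul,
    smul_eq_mul, ← mul_assoc, ENNReal.inv_mul_cancel (by simp) ENNReal.ofReal_ne_top, one_mul]
end

section
/- Among all measurable functions b : [−2,2] → ℝ satisfying 0 ≤ b(v) ≤ 1−|v|/2 and (1/2)∫_{−2}^{2} b(v) dv = 1−α, the functional Γ(b) = ∫_{−2}^{2} b(v)·(2−|v|)/4 dv is minimized by b*(v) = (1−|v|/2)·1{|v| ≥ k_α} with k_α = 2(1−√(1−α)). -/
open MeasureTheory Set

lemma myIntOn (f : ℝ → ℝ) (hf : Measurable f) (a b C : ℝ)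
    (h : ∀ x ∈ Icc a b, |f x| ≤ C) : IntegrableOn f (Icc a b) := by
  apply Measure.integrableOn_of_bounded (M := C) measure_Icc_lt_top.ne
    hf.aestronglyMeasurable
  refine (ae_restrict_iff' measurableSet_Icc).2 (Filter.Eventually.of_forall ?_)
  intro x hx
  simpa [Real.norm_eq_abs] using h x hx

lemma myII (f : ℝ → ℝ) (hf : Measurable f) (a b C : ℝ) (hab : a ≤ b)
    (h : ∀ x ∈ Icc a b, |f x| ≤ C) : IntervalIntegrable f volume a b := by
  rw [intervalIntegrable_iff_integrableOn_Ioc_of_le hab]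
  exact (myIntOn f hf a b C h).mono_set Ioc_subset_Icc_self

theorem stmt14 (α : ℝ) (hα0 : 0 < α) (hα1 : α < 1) :
    ∀ b : ℝ → ℝ, Measurable b →
      (∀ v ∈ Icc (-2 : ℝ) 2, 0 ≤ b v ∧ b v ≤ 1 - |v|/2) →
      (1/2) * (∫ v in Icc (-2 : ℝ) 2, b v) = 1 - α →
      (∫ v in Icc (-2 : ℝ) 2,
          (if 2 * (1 - Real.sqrt (1 - α)) ≤ |v| then 1 - |v|/2 else 0) * ((2 - |v|)/4))
        ≤ ∫ v in Icc (-2 : ℝ) 2, b v * ((2 - |v|)/4) := by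
  intro b hb hbd hint
  set k := 2 * (1 - Real.sqrt (1 - α)) with hkdef
  have h1α : (0:ℝ) < 1 - α := by linarith
  have hsq : Real.sqrt (1 - α) ^ 2 = 1 - α := Real.sq_sqrt h1α.le
  have hsqpos : 0 < Real.sqrt (1 - α) := Real.sqrt_pos.2 h1α
  have hsqlt : Real.sqrt (1 - α) < 1 := by
    nlinarith [Real.sqrt_nonneg (1 - α)]
  have hk0 : 0 < k := by simp only [hkdef]; nlinarith
  have hk2 : k < 2 := by simp only [hkdef]; nlinarith
  set bs : ℝ → ℝ := fun v => if k ≤ |v| then 1 - |v|/2 else 0 with hbsdef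
  have hbs_meas : Measurable bs := by
    apply Measurable.ite
    · exact measurableSet_le measurable_const measurable_abs
    · exact measurable_const.sub (measurable_abs.div_const 2)
    · exact measurable_const
  have hbs_bd : ∀ x ∈ Icc (-2:ℝ) 2, |bs x| ≤ 1 := by
    intro x hx
    have hx2 : |x| ≤ 2 := abs_le.2 ⟨hx.1, hx.2⟩
    have hx0 : 0 ≤ |x| := abs_nonneg x
    simp only [hbsdef]
    split <;> rw [abs_of_nonneg (by linarith)] <;> linarith
  -- integral of bs
  have hIbs : ∫ v in Icc (-2:ℝ) 2, bs v = 2 * (1 - α) := by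
    rw [MeasureTheory.integral_Icc_eq_integral_Ioc,
      ← intervalIntegral.integral_of_le (by norm_num : (-2:ℝ) ≤ 2)]
    have i1 : IntervalIntegrable bs volume (-2) (-k) :=
      myII bs hbs_meas _ _ 1 (by linarith) (fun x hx => hbs_bd x ⟨hx.1, by linarith [hx.2]⟩)
    have i2 : IntervalIntegrable bs volume (-k) k :=
      myII bs hbs_meas _ _ 1 (by linarith) (fun x hx => hbs_bd x ⟨by linarith [hx.1], by linarith [hx.2]⟩)
    have i3 : IntervalIntegrable bs volume k 2 :=
      myII bs hbs_meas _ _ 1 (by linarith) (fun x hx => hbs_bd x ⟨by linarith [hx.1], hx.2⟩)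
    rw [← intervalIntegral.integral_add_adjacent_intervals (i1.trans i2) i3,
      ← intervalIntegral.integral_add_adjacent_intervals i1 i2]
    have e1 : ∫ v in (-2:ℝ)..(-k), bs v = ∫ v in (-2:ℝ)..(-k), (1 + v/2) := by
      apply intervalIntegral.integral_congr
      intro x hx
      rw [uIcc_of_le (by linarith)] at hx
      have hx1 : x ≤ -k := hx.2
      have : |x| = -x := abs_of_nonpos (by linarith)
      simp only [hbsdef, this, if_pos (by linarith : k ≤ -x)]
      ring
    have e3 : ∫ v in k..(2:ℝ), bs v = ∫ v in k..(2:ℝ), (1 - v/2) := by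
      apply intervalIntegral.integral_congr
      intro x hx
      rw [uIcc_of_le (by linarith)] at hx
      have : |x| = x := abs_of_nonneg (by linarith [hx.1])
      simp only [hbsdef, this, if_pos hx.1]
    have e2 : ∫ v in (-k:ℝ)..k, bs v = 0 := by
      have h0 : ∀ᵐ x : ℝ, x ∈ Set.uIoc (-k) k → bs x = 0 := by
        have hne : ∀ᵐ x : ℝ, x ≠ k ∧ x ≠ -k := by
          have h1 : ∀ᵐ x : ℝ, x ≠ k := by
            rw [ae_iff]; simp [Real.volume_singleton]
          have h2 : ∀ᵐ x : ℝ, x ≠ -k := by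
            rw [ae_iff]; simp [Real.volume_singleton]
          exact h1.and h2
        filter_upwards [hne] with x hx hxm
        rw [uIoc_of_le (by linarith)] at hxm
        have : |x| < k := by
          rcases abs_lt.2 ⟨lt_of_le_of_ne (le_of_lt hxm.1) (Ne.symm hx.2), lt_of_le_of_ne hxm.2 hx.1⟩ with h
          exact h
        simp only [hbsdef, if_neg (not_le.2 this)]
      calc ∫ v in (-k:ℝ)..k, bs v = ∫ _ in (-k:ℝ)..k, (0:ℝ) :=
            intervalIntegral.integral_congr_ae h0
        _ = 0 := by simp
    rw [e1, e2, e3]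
    have c1 : IntervalIntegrable (fun v : ℝ => v/2) volume (-2) (-k) :=
      (intervalIntegral.intervalIntegrable_id).div_const 2
    have c3 : IntervalIntegrable (fun v : ℝ => v/2) volume k 2 :=
      (intervalIntegral.intervalIntegrable_id).div_const 2
    rw [intervalIntegral.integral_add intervalIntegrable_const c1,
      intervalIntegral.integral_sub intervalIntegrable_const c3]
    simp only [intervalIntegral.integral_div, intervalIntegral.integral_const,
      integral_id, smul_eq_mul]
    simp only [hkdef]
    nlinarith
  have hIb : ∫ v in Icc (-2:ℝ) 2, b v = 2 * (1 - α) := by linarith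
  -- integrabilities on Icc
  have hb_bd : ∀ x ∈ Icc (-2:ℝ) 2, |b x| ≤ 1 := by
    intro x hx
    obtain ⟨h0, h1⟩ := hbd x hx
    rw [abs_of_nonneg h0]
    have := abs_nonneg x
    linarith
  have hw_meas : Measurable fun v : ℝ => (2 - |v|)/4 :=
    (measurable_const.sub measurable_abs).div_const 4
  have hw_bd : ∀ x ∈ Icc (-2:ℝ) 2, |(2 - |x|)/4| ≤ 1 := by
    intro x hx
    have hx2 : |x| ≤ 2 := abs_le.2 ⟨hx.1, hx.2⟩
    have hx0 : 0 ≤ |x| := abs_nonneg x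
    rw [abs_of_nonneg (by linarith)]; linarith
  have hb_int : IntegrableOn b (Icc (-2:ℝ) 2) := myIntOn b hb _ _ 1 hb_bd
  have hbs_int : IntegrableOn bs (Icc (-2:ℝ) 2) := myIntOn bs hbs_meas _ _ 1 hbs_bd
  have hbw_int : IntegrableOn (fun v => b v * ((2 - |v|)/4)) (Icc (-2:ℝ) 2) := by
    apply myIntOn _ (hb.mul hw_meas) _ _ 1
    intro x hx
    rw [Pi.mul_apply, abs_mul]
    calc |b x| * |(2 - |x|)/4| ≤ 1 * 1 :=
          mul_le_mul (hb_bd x hx) (hw_bd x hx) (abs_nonneg _) zero_le_one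
      _ = 1 := by ring
  have hbsw_int : IntegrableOn (fun v => bs v * ((2 - |v|)/4)) (Icc (-2:ℝ) 2) := by
    apply myIntOn _ (hbs_meas.mul hw_meas) _ _ 1
    intro x hx
    rw [Pi.mul_apply, abs_mul]
    calc |bs x| * |(2 - |x|)/4| ≤ 1 * 1 :=
          mul_le_mul (hbs_bd x hx) (hw_bd x hx) (abs_nonneg _) zero_le_one
      _ = 1 := by ring
  -- key pointwise inequality
  set c : ℝ := (2 - k)/4 with hcdef
  have key : 0 ≤ ∫ v in Icc (-2:ℝ) 2, (b v - bs v) * ((2 - |v|)/4 - c) := by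
    apply setIntegral_nonneg measurableSet_Icc
    intro x hx
    obtain ⟨h0, h1⟩ := hbd x hx
    by_cases hc : k ≤ |x|
    · simp only [hbsdef, if_pos hc]
      nlinarith
    · simp only [hbsdef, if_neg hc]
      push_neg at hc
      nlinarith
  -- expand
  have hexp : ∀ v : ℝ, (b v - bs v) * ((2 - |v|)/4 - c)
      = (b v * ((2 - |v|)/4) - bs v * ((2 - |v|)/4)) - (c * b v - c * bs v) := by
    intro v; ring
  have h1 : IntegrableOn (fun v => b v * ((2 - |v|)/4) - bs v * ((2 - |v|)/4)) (Icc (-2:ℝ) 2) :=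
    hbw_int.sub hbsw_int
  have hcb : IntegrableOn (fun v => c * b v) (Icc (-2:ℝ) 2) := hb_int.const_mul c
  have hcbs : IntegrableOn (fun v => c * bs v) (Icc (-2:ℝ) 2) := hbs_int.const_mul c
  have h2 : IntegrableOn (fun v => c * b v - c * bs v) (Icc (-2:ℝ) 2) := hcb.sub hcbs
  rw [show (∫ v in Icc (-2:ℝ) 2, (b v - bs v) * ((2 - |v|)/4 - c))
      = ∫ v in Icc (-2:ℝ) 2, ((b v * ((2 - |v|)/4) - bs v * ((2 - |v|)/4)) - (c * b v - c * bs v))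
      from integral_congr_ae (Filter.Eventually.of_forall fun v => hexp v)] at key
  rw [integral_sub h1 h2, integral_sub hbw_int hbsw_int, integral_sub hcb hcbs,
    integral_const_mul, integral_const_mul, hIb, hIbs] at key
  have final : ∫ v in Icc (-2:ℝ) 2, bs v * ((2 - |v|)/4)
      ≤ ∫ v in Icc (-2:ℝ) 2, b v * ((2 - |v|)/4) := by linarith
  simpa only [hbsdef] using final
end

section
/- Let X1, X2 be i.i.d. uniform on [θ−1, θ+1], M = (X1+X2)/2, V = X2−X1. Given a measurable b : [−2,2] → [0,∞), the coverage probability of the interval M ± b(V) conditional on V = v, truncated to admissible values, satisfies: if b(v) ≤ 1−|v|/2 then P(θ ∈ [M−b(V), M+b(V)] | V=v) = b(v)/(1−|v|/2), and the unconditional coverage equals (1/2)∫_{−2}^{2} min(b(v), 1−|v|/2) dv. -/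
open MeasureTheory ProbabilityTheory Set
open scoped ENNReal

lemma unif_prob (θ : ℝ) : IsProbabilityMeasure (unifIcc (θ-1) (θ+1)) := by
  constructor
  rw [unifIcc, Measure.smul_apply, Measure.restrict_apply_univ, Real.volume_Icc]
  rw [show θ + 1 - (θ - 1) = 2 by ring, smul_eq_mul]
  exact ENNReal.inv_mul_cancel (by simp) (by simp)

lemma master (F : ℝ → ℝ → ℝ≥0∞) (hF : Measurable (Function.uncurry F)) :
    ∫⁻ x1, ∫⁻ x2, F x1 x2 ∂volume ∂volume
      = ∫⁻ v, ∫⁻ m, F (m - v/2) (m + v/2) ∂volume ∂volume := by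
  have h1 : ∀ x1 : ℝ, ∫⁻ x2, F x1 x2 ∂volume = ∫⁻ v, F x1 (v + x1) ∂volume :=
    fun x1 => (lintegral_add_right_eq_self (fun t => F x1 t) x1).symm
  simp_rw [h1]
  rw [lintegral_lintegral_swap]
  · refine lintegral_congr fun v => ?_
    calc ∫⁻ x1, F x1 (v + x1) ∂volume
        = ∫⁻ m, (fun x1 => F x1 (v + x1)) (m + -(v/2)) ∂volume :=
          (lintegral_add_right_eq_self (fun x1 => F x1 (v + x1)) (-(v/2))).symm
      _ = ∫⁻ m, F (m - v/2) (m + v/2) ∂volume := by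
          refine lintegral_congr fun m => ?_
          have e1 : m + -(v/2) = m - v/2 := by ring
          simp only [e1, show v + (m - v/2) = m + v/2 by ring]
  · exact (hF.comp (measurable_fst.prodMk (measurable_snd.add measurable_fst))).aemeasurable

lemma mem_equiv (θ v m : ℝ) :
    m ∈ Icc (θ-1+|v|/2) (θ+1-|v|/2)
      ↔ (m - v/2 ∈ Icc (θ-1) (θ+1) ∧ m + v/2 ∈ Icc (θ-1) (θ+1)) := by
  simp only [mem_Icc]
  rcases abs_cases v with ⟨h1, h2⟩ | ⟨h1, h2⟩ <;> rw [h1] <;>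
    exact ⟨fun ⟨ha, hb⟩ => ⟨⟨by linarith, by linarith⟩, ⟨by linarith, by linarith⟩⟩,
           fun ⟨⟨a1, a2⟩, ⟨b1, b2⟩⟩ => ⟨by linarith, by linarith⟩⟩

lemma jointL (θ : ℝ) (F : ℝ × ℝ → ℝ≥0∞) (hF : Measurable F) :
    ∫⁻ p, F p ∂(joint θ) = (ENNReal.ofReal 2)⁻¹ * ((ENNReal.ofReal 2)⁻¹ *
      ∫⁻ v, ∫⁻ m in Icc (θ-1+|v|/2) (θ+1-|v|/2), F (m - v/2, m + v/2) ∂volume ∂volume) := by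
  haveI := unif_prob θ
  have hI : unifIcc (θ-1) (θ+1)
      = (ENNReal.ofReal 2)⁻¹ • volume.restrict (Icc (θ-1) (θ+1)) := by
    rw [unifIcc, show θ + 1 - (θ - 1) = 2 by ring]
  set G : ℝ → ℝ → ℝ≥0∞ :=
    fun x y => (Icc (θ-1) (θ+1) ×ˢ Icc (θ-1) (θ+1)).indicator F (x, y) with hGdef
  have hSm : MeasurableSet (Icc (θ-1) (θ+1) ×ˢ Icc (θ-1) (θ+1)) :=
    measurableSet_Icc.prod measurableSet_Icc
  have hG : Measurable (Function.uncurry G) := by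
    exact hF.indicator hSm
  rw [joint, lintegral_prod F hF.aemeasurable]
  calc ∫⁻ x, ∫⁻ y, F (x, y) ∂(unifIcc (θ-1) (θ+1)) ∂(unifIcc (θ-1) (θ+1))
      = (ENNReal.ofReal 2)⁻¹ * ((ENNReal.ofReal 2)⁻¹ *
          ∫⁻ x in Icc (θ-1) (θ+1), ∫⁻ y in Icc (θ-1) (θ+1), F (x, y) ∂volume ∂volume) := by
        simp_rw [hI, lintegral_smul_measure]
        simp_rw [smul_eq_mul]
        rw [lintegral_const_mul' _ _ (by simp)]
    _ = (ENNReal.ofReal 2)⁻¹ * ((ENNReal.ofReal 2)⁻¹ *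
          ∫⁻ x, ∫⁻ y, G x y ∂volume ∂volume) := by
        congr 2
        rw [← lintegral_indicator measurableSet_Icc]
        refine lintegral_congr fun x => ?_
        by_cases hx : x ∈ Icc (θ-1) (θ+1)
        · rw [indicator_of_mem hx, ← lintegral_indicator measurableSet_Icc]
          refine lintegral_congr fun y => ?_
          simp only [hGdef]
          by_cases hy : y ∈ Icc (θ-1) (θ+1)
          · rw [indicator_of_mem hy, indicator_of_mem (Set.mem_prod.2 ⟨hx, hy⟩)]
          · rw [indicator_of_notMem hy,
              indicator_of_notMem (fun h => hy (Set.mem_prod.1 h).2)]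
        · rw [indicator_of_notMem hx]
          have hz : ∀ y : ℝ, G x y = 0 := fun y =>
            indicator_of_notMem (fun h => hx (Set.mem_prod.1 h).1) _
          rw [lintegral_congr hz, lintegral_zero]
    _ = (ENNReal.ofReal 2)⁻¹ * ((ENNReal.ofReal 2)⁻¹ *
          ∫⁻ v, ∫⁻ m in Icc (θ-1+|v|/2) (θ+1-|v|/2), F (m - v/2, m + v/2) ∂volume ∂volume) := by
        rw [master G hG]
        congr 2
        refine lintegral_congr fun v => ?_
        rw [← lintegral_indicator measurableSet_Icc]
        refine lintegral_congr fun m => ?_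
        simp only [hGdef]
        by_cases hm : m ∈ Icc (θ-1+|v|/2) (θ+1-|v|/2)
        · rw [indicator_of_mem hm,
            indicator_of_mem (Set.mem_prod.2 ((mem_equiv θ v m).1 hm))]
        · rw [indicator_of_notMem hm,
            indicator_of_notMem (fun h => hm ((mem_equiv θ v m).2 (Set.mem_prod.1 h)))]

noncomputable def fdens (θ : ℝ) : ℝ → ℝ → ℝ≥0∞ := fun v =>
  if |v| < 2 then
    (Icc (θ-1+|v|/2) (θ+1-|v|/2)).indicator (fun _ => (ENNReal.ofReal (2-|v|))⁻¹)
  else (Icc θ (θ+1)).indicator 1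

lemma fdens_meas (θ : ℝ) : Measurable (Function.uncurry (fdens θ)) := by
  have hA : MeasurableSet {p : ℝ × ℝ | θ-1+|p.1|/2 ≤ p.2 ∧ p.2 ≤ θ+1-|p.1|/2} := by
    refine MeasurableSet.inter ?_ ?_
    · exact measurableSet_le (measurable_const.add (measurable_fst.abs.div_const 2))
        measurable_snd
    · exact measurableSet_le measurable_snd
        (measurable_const.sub (measurable_fst.abs.div_const 2))
  have hB : MeasurableSet {p : ℝ × ℝ | θ ≤ p.2 ∧ p.2 ≤ θ+1} :=
    (measurableSet_le measurable_const measurable_snd).inter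
      (measurableSet_le measurable_snd measurable_const)
  have h1 : Measurable fun p : ℝ × ℝ =>
      {p : ℝ × ℝ | θ-1+|p.1|/2 ≤ p.2 ∧ p.2 ≤ θ+1-|p.1|/2}.indicator
        (fun p => (ENNReal.ofReal (2-|p.1|))⁻¹) p :=
    (ENNReal.measurable_ofReal.comp (measurable_const.sub measurable_fst.abs)).inv.indicator hA
  have h2 : Measurable fun p : ℝ × ℝ =>
      {p : ℝ × ℝ | θ ≤ p.2 ∧ p.2 ≤ θ+1}.indicator (fun _ => (1:ℝ≥0∞)) p :=
    measurable_const.indicator hB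
  have : Function.uncurry (fdens θ) = fun p : ℝ × ℝ =>
      if |p.1| < 2 then
        {p : ℝ × ℝ | θ-1+|p.1|/2 ≤ p.2 ∧ p.2 ≤ θ+1-|p.1|/2}.indicator
          (fun p => (ENNReal.ofReal (2-|p.1|))⁻¹) p
      else {p : ℝ × ℝ | θ ≤ p.2 ∧ p.2 ≤ θ+1}.indicator (fun _ => (1:ℝ≥0∞)) p := by
    funext p
    simp only [Function.uncurry, fdens]
    by_cases hv : |p.1| < 2
    · rw [if_pos hv, if_pos hv]
      by_cases hm : p.2 ∈ Icc (θ-1+|p.1|/2) (θ+1-|p.1|/2)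
      · rw [indicator_of_mem hm, indicator_of_mem (by simpa [mem_Icc] using hm)]
      · rw [indicator_of_notMem hm, indicator_of_notMem (by simpa [mem_Icc] using hm)]
    · rw [if_neg hv, if_neg hv]
      by_cases hm : p.2 ∈ Icc θ (θ+1)
      · rw [indicator_of_mem hm, indicator_of_mem (by simpa [mem_Icc] using hm)]
        rfl
      · rw [indicator_of_notMem hm, indicator_of_notMem (by simpa [mem_Icc] using hm)]
  rw [this]
  exact Measurable.ite (measurableSet_lt measurable_fst.abs measurable_const) h1 h2

noncomputable def ker (θ : ℝ) : Kernel ℝ ℝ :=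
  Kernel.withDensity (Kernel.const ℝ (volume : Measure ℝ)) (fdens θ)

lemma ker_apply (θ v : ℝ) (t : Set ℝ) :
    ker θ v t = ∫⁻ m in t, fdens θ v m ∂volume := by
  rw [ker, Kernel.withDensity_apply' _ (fdens_meas θ) v t, Kernel.const_apply]

lemma ker_apply_lt (θ v : ℝ) (hv : |v| < 2) (t : Set ℝ) (ht : MeasurableSet t) :
    ker θ v t = (ENNReal.ofReal (2-|v|))⁻¹ * volume (Icc (θ-1+|v|/2) (θ+1-|v|/2) ∩ t) := by
  rw [ker_apply, fdens, if_pos hv, lintegral_indicator measurableSet_Icc,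
    setLIntegral_const, Measure.restrict_apply measurableSet_Icc]

lemma vol_Icc_vm (θ v : ℝ) :
    volume (Icc (θ-1+|v|/2) (θ+1-|v|/2)) = ENNReal.ofReal (2-|v|) := by
  rw [Real.volume_Icc, show θ+1-|v|/2 - (θ-1+|v|/2) = 2 - |v| by ring]

lemma ker_markov (θ : ℝ) : IsMarkovKernel (ker θ) := by
  refine ⟨fun v => ⟨?_⟩⟩
  rw [ker_apply, Measure.restrict_univ]
  by_cases hv : |v| < 2
  · rw [show fdens θ v = (Icc (θ-1+|v|/2) (θ+1-|v|/2)).indicator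
        (fun _ => (ENNReal.ofReal (2-|v|))⁻¹) from if_pos hv,
      lintegral_indicator measurableSet_Icc, setLIntegral_const, vol_Icc_vm]
    exact ENNReal.inv_mul_cancel (ENNReal.ofReal_pos.2 (by linarith [abs_nonneg v])).ne'
      ENNReal.ofReal_ne_top
  · rw [show fdens θ v = (Icc θ (θ+1)).indicator 1 from if_neg hv,
      lintegral_indicator_one measurableSet_Icc, Real.volume_Icc]
    simp

lemma ker_key (θ v : ℝ) (t : Set ℝ) (ht : MeasurableSet t) :
    ker θ v t * ENNReal.ofReal (2-|v|)
      = volume (Icc (θ-1+|v|/2) (θ+1-|v|/2) ∩ t) := by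
  by_cases hv : |v| < 2
  · rw [ker_apply_lt θ v hv t ht, mul_comm, ← mul_assoc,
      ENNReal.mul_inv_cancel (ENNReal.ofReal_pos.2 (by linarith [abs_nonneg v])).ne'
        ENNReal.ofReal_ne_top, one_mul]
  · have h2 : ENNReal.ofReal (2-|v|) = 0 := by
      rw [ENNReal.ofReal_eq_zero]; linarith [not_lt.1 hv]
    rw [h2, mul_zero]
    refine (le_antisymm ?_ (zero_le ..)).symm
    calc volume (Icc (θ-1+|v|/2) (θ+1-|v|/2) ∩ t)
        ≤ volume (Icc (θ-1+|v|/2) (θ+1-|v|/2)) := measure_mono inter_subset_left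
      _ = 0 := by rw [vol_Icc_vm, h2]

theorem stmt17 (θ : ℝ) (b : ℝ → ℝ) (hb : Measurable b) (hb0 : ∀ v, 0 ≤ b v) :
    (∃ κ : Kernel ℝ ℝ, IsMarkovKernel κ ∧
      Measure.map (fun p : ℝ × ℝ => (p.2 - p.1, (p.1 + p.2)/2)) (joint θ)
        = (Measure.map (fun p : ℝ × ℝ => p.2 - p.1) (joint θ)) ⊗ₘ κ ∧
      ∀ᵐ v ∂(Measure.map (fun p : ℝ × ℝ => p.2 - p.1) (joint θ)),
        b v ≤ 1 - |v|/2 →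
          κ v {m : ℝ | m - b v ≤ θ ∧ θ ≤ m + b v}
            = ENNReal.ofReal (b v / (1 - |v|/2))) ∧
    joint θ {p : ℝ × ℝ | |(p.1 + p.2)/2 - θ| ≤ b (p.2 - p.1)}
      = ENNReal.ofReal ((1/2) * ∫ v in Icc (-2 : ℝ) 2, min (b v) (1 - |v|/2)) := by
  haveI := unif_prob θ
  haveI hjp : IsProbabilityMeasure (joint θ) := by rw [joint]; infer_instance
  haveI hκm : IsMarkovKernel (ker θ) := ker_markov θ
  have hq : Measurable (fun p : ℝ × ℝ => p.2 - p.1) := measurable_snd.sub measurable_fst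
  have hT : Measurable (fun p : ℝ × ℝ => (p.2 - p.1, (p.1 + p.2)/2)) :=
    hq.prodMk ((measurable_fst.add measurable_snd).div_const 2)
  haveI : IsProbabilityMeasure (Measure.map (fun p : ℝ × ℝ => p.2 - p.1) (joint θ)) :=
    Measure.isProbabilityMeasure_map hq.aemeasurable
  haveI : IsProbabilityMeasure
      (Measure.map (fun p : ℝ × ℝ => (p.2 - p.1, (p.1 + p.2)/2)) (joint θ)) :=
    Measure.isProbabilityMeasure_map hT.aemeasurable
  constructor
  · refine ⟨ker θ, hκm, ?_, ?_⟩
    · -- compProd equality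
      refine ext_of_generate_finite _ generateFrom_prod.symm isPiSystem_prod ?_ ?_
      · rintro _ ⟨s, hs, t, ht, rfl⟩
        simp only [mem_setOf_eq] at hs ht
        rw [Measure.map_apply hT (hs.prod ht), Measure.compProd_apply_prod hs ht]
        rw [← lintegral_indicator_one (hT (hs.prod ht)),
          jointL θ _ (measurable_one.indicator (hT (hs.prod ht))),
          ← lintegral_indicator hs,
          lintegral_map ((Kernel.measurable_coe (ker θ) ht).indicator hs) hq,
          jointL θ (fun p : ℝ × ℝ => s.indicator (fun v => ker θ v t) (p.2 - p.1))
            (by exact ((Kernel.measurable_coe (ker θ) ht).indicator hs).comp hq)]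
        congr 2
        refine lintegral_congr fun v => ?_
        have e1 : ∀ m : ℝ, m + v/2 - (m - v/2) = v := fun m => by ring
        have e2 : ∀ m : ℝ, ((m - v/2) + (m + v/2))/2 = m := fun m => by ring
        by_cases hv : v ∈ s
        · have hl : ∀ m : ℝ,
              ((fun p : ℝ × ℝ => (p.2 - p.1, (p.1 + p.2)/2)) ⁻¹' s ×ˢ t).indicator 1
                (m - v/2, m + v/2) = t.indicator (1 : ℝ → ℝ≥0∞) m := by
            intro m
            have hmem : ((m - v/2, m + v/2)
                ∈ (fun p : ℝ × ℝ => (p.2 - p.1, (p.1 + p.2)/2)) ⁻¹' s ×ˢ t) ↔ m ∈ t := by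
              simp only [mem_preimage, Set.mem_prod, e1 m, e2 m]
              simp [hv]
            by_cases hm : m ∈ t
            · rw [indicator_of_mem (hmem.2 hm), indicator_of_mem hm]
              rfl
            · rw [indicator_of_notMem (fun h => hm (hmem.1 h)), indicator_of_notMem hm]
          have hr : ∀ m : ℝ,
              s.indicator (fun v => (ker θ) v t) ((m - v/2, m + v/2).2 - (m - v/2, m + v/2).1)
                = ker θ v t := by
            intro m
            show s.indicator (fun v => (ker θ) v t) (m + v/2 - (m - v/2)) = _
            rw [e1 m, indicator_of_mem hv]
          rw [lintegral_congr hl, lintegral_congr hr, lintegral_indicator_one ht,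
            Measure.restrict_apply ht, setLIntegral_const, vol_Icc_vm, ker_key θ v t ht,
            inter_comm]
        · have hl : ∀ m : ℝ,
              ((fun p : ℝ × ℝ => (p.2 - p.1, (p.1 + p.2)/2)) ⁻¹' s ×ˢ t).indicator
                (1 : ℝ × ℝ → ℝ≥0∞) (m - v/2, m + v/2) = 0 := by
            intro m
            refine indicator_of_notMem (fun h => hv ?_) _
            have := (Set.mem_prod.1 (mem_preimage.1 h)).1
            simpa [e1 m] using this
          have hr : ∀ m : ℝ,
              s.indicator (fun v => (ker θ) v t) ((m - v/2, m + v/2).2 - (m - v/2, m + v/2).1)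
                = 0 := by
            intro m
            show s.indicator (fun v => (ker θ) v t) (m + v/2 - (m - v/2)) = 0
            rw [e1 m, indicator_of_notMem hv]
          rw [lintegral_congr hl, lintegral_congr hr]
      · simp [measure_univ]
    · -- a.e. statement
      have hA : MeasurableSet {v : ℝ | 2 ≤ |v|} :=
        measurableSet_le measurable_const measurable_abs
      have hA0 : Measure.map (fun p : ℝ × ℝ => p.2 - p.1) (joint θ) {v : ℝ | 2 ≤ |v|} = 0 := by
        rw [Measure.map_apply hq hA, ← lintegral_indicator_one (hq hA),
          jointL θ _ (measurable_one.indicator (hq hA))]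
        have hz : ∀ v : ℝ, ∫⁻ m in Icc (θ-1+|v|/2) (θ+1-|v|/2),
            ((fun p : ℝ × ℝ => p.2 - p.1) ⁻¹' {v : ℝ | 2 ≤ |v|}).indicator 1
              (m - v/2, m + v/2) ∂volume = 0 := by
          intro v
          have e1 : ∀ m : ℝ, m + v/2 - (m - v/2) = v := fun m => by ring
          by_cases hv : (2:ℝ) ≤ |v|
          · have hc : ∀ m : ℝ, ((fun p : ℝ × ℝ => p.2 - p.1) ⁻¹' {v : ℝ | 2 ≤ |v|}).indicator
                (1 : ℝ × ℝ → ℝ≥0∞) (m - v/2, m + v/2) = 1 := by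
              intro m
              rw [indicator_of_mem]
              · rfl
              · show (2:ℝ) ≤ |m + v/2 - (m - v/2)|
                rw [e1 m]; exact hv
            rw [lintegral_congr hc, setLIntegral_const, one_mul, vol_Icc_vm,
              ENNReal.ofReal_eq_zero]
            linarith
          · have hc : ∀ m : ℝ, ((fun p : ℝ × ℝ => p.2 - p.1) ⁻¹' {v : ℝ | 2 ≤ |v|}).indicator
                (1 : ℝ × ℝ → ℝ≥0∞) (m - v/2, m + v/2) = 0 := by
              intro m
              refine indicator_of_notMem (fun h => hv ?_) _
              have : (2:ℝ) ≤ |m + v/2 - (m - v/2)| := h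
              rwa [e1 m] at this
            rw [lintegral_congr hc, lintegral_zero]
        rw [lintegral_congr hz, lintegral_zero, mul_zero, mul_zero]
      have hae : ∀ᵐ v ∂(Measure.map (fun p : ℝ × ℝ => p.2 - p.1) (joint θ)), |v| < 2 := by
        rw [ae_iff]
        convert hA0 using 2
        ext v
        simp [not_lt]
      filter_upwards [hae] with v hv hbv
      have hSeq : {m : ℝ | m - b v ≤ θ ∧ θ ≤ m + b v} = Icc (θ - b v) (θ + b v) := by
        ext m
        simp only [mem_setOf_eq, mem_Icc]
        constructor <;> exact fun ⟨h1, h2⟩ => ⟨by linarith, by linarith⟩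
      have h2v : (0:ℝ) < 2 - |v| := by linarith
      rw [hSeq, ker_apply_lt θ v hv _ measurableSet_Icc,
        inter_eq_self_of_subset_right (Icc_subset_Icc (by linarith) (by linarith)),
        Real.volume_Icc, show θ + b v - (θ - b v) = 2 * b v by ring,
        show b v / (1 - |v|/2) = 2 * b v / (2 - |v|) by
          rw [div_eq_div_iff (by linarith : (0:ℝ) < 1 - |v|/2).ne' h2v.ne']; ring,
        ENNReal.ofReal_div_of_pos h2v, div_eq_mul_inv]
      exact mul_comm _ _
  · -- Part B
    have hE : MeasurableSet {p : ℝ × ℝ | |(p.1 + p.2)/2 - θ| ≤ b (p.2 - p.1)} :=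
      measurableSet_le
        (((measurable_fst.add measurable_snd).div_const 2).sub measurable_const).abs
        (hb.comp hq)
    rw [← lintegral_indicator_one hE, jointL θ _ (measurable_one.indicator hE)]
    have hinner : ∀ v : ℝ, ∫⁻ m in Icc (θ-1+|v|/2) (θ+1-|v|/2),
        ({p : ℝ × ℝ | |(p.1 + p.2)/2 - θ| ≤ b (p.2 - p.1)}).indicator 1
          (m - v/2, m + v/2) ∂volume
        = ENNReal.ofReal (2 * min (b v) (1 - |v|/2)) := by
      intro v
      have e1 : ∀ m : ℝ, m + v/2 - (m - v/2) = v := fun m => by ring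
      have hc : ∀ m : ℝ, ({p : ℝ × ℝ | |(p.1 + p.2)/2 - θ| ≤ b (p.2 - p.1)}).indicator
          (1 : ℝ × ℝ → ℝ≥0∞) (m - v/2, m + v/2)
          = (Icc (θ - b v) (θ + b v)).indicator (1 : ℝ → ℝ≥0∞) m := by
        intro m
        have hmem : ((m - v/2, m + v/2) ∈ {p : ℝ × ℝ | |(p.1 + p.2)/2 - θ| ≤ b (p.2 - p.1)})
            ↔ m ∈ Icc (θ - b v) (θ + b v) := by
          show |((m - v/2) + (m + v/2))/2 - θ| ≤ b (m + v/2 - (m - v/2)) ↔ _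
          rw [e1 m, show ((m - v/2) + (m + v/2))/2 - θ = m - θ by ring, abs_le, mem_Icc]
          constructor <;> exact fun ⟨h1, h2⟩ => ⟨by linarith, by linarith⟩
        by_cases hm : m ∈ Icc (θ - b v) (θ + b v)
        · rw [indicator_of_mem (hmem.2 hm), indicator_of_mem hm]
          rfl
        · rw [indicator_of_notMem (fun h => hm (hmem.1 h)), indicator_of_notMem hm]
      rw [lintegral_congr hc, lintegral_indicator_one measurableSet_Icc,
        Measure.restrict_apply measurableSet_Icc, Icc_inter_Icc, Real.volume_Icc]
      congr 1
      rcases le_total (b v) (1 - |v|/2) with h | h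
      · rw [min_eq_left (by linarith), max_eq_left (by linarith),
          min_eq_left h]
        ring
      · rw [min_eq_right (by linarith), max_eq_right (by linarith),
          min_eq_right h]
        ring
    rw [lintegral_congr hinner]
    have hres : ∫⁻ v, ENNReal.ofReal (2 * min (b v) (1 - |v|/2)) ∂volume
        = ∫⁻ v in Icc (-2:ℝ) 2, ENNReal.ofReal (2 * min (b v) (1 - |v|/2)) ∂volume := by
      rw [← lintegral_indicator measurableSet_Icc]
      refine lintegral_congr fun v => ?_
      by_cases hv : v ∈ Icc (-2:ℝ) 2
      · rw [indicator_of_mem hv]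
      · rw [indicator_of_notMem hv]
        have h2 : 2 < |v| := lt_of_not_ge fun h => hv (mem_Icc.2 (abs_le.1 h))
        rw [ENNReal.ofReal_eq_zero]
        have : min (b v) (1 - |v|/2) ≤ 1 - |v|/2 := min_le_right _ _
        linarith
    have hgmeas : Measurable fun v : ℝ => min (b v) (1 - |v|/2) :=
      hb.min (measurable_const.sub (measurable_abs.div_const 2))
    have hint : IntegrableOn (fun v : ℝ => min (b v) (1 - |v|/2)) (Icc (-2:ℝ) 2) volume := by
      refine Integrable.mono' (g := fun _ => (1:ℝ))
        (integrableOn_const (lt_top_iff_ne_top.1 ?_)) hgmeas.aestronglyMeasurable ?_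
      · rw [Real.volume_Icc]; exact ENNReal.ofReal_lt_top
      · refine (ae_restrict_iff' measurableSet_Icc).2
          (Filter.Eventually.of_forall fun v hv => ?_)
        rcases mem_Icc.1 hv with ⟨h1, h2⟩
        have hab : |v| ≤ 2 := abs_le.2 ⟨h1, h2⟩
        rw [Real.norm_eq_abs, abs_le]
        constructor
        · have : (0:ℝ) ≤ min (b v) (1 - |v|/2) := le_min (hb0 v) (by linarith)
          linarith
        · have h3 : min (b v) (1 - |v|/2) ≤ 1 - |v|/2 := min_le_right _ _
          have h4 := abs_nonneg v
          linarith
    have h0 : 0 ≤ᵐ[volume.restrict (Icc (-2:ℝ) 2)] fun v => min (b v) (1 - |v|/2) := by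
      refine (ae_restrict_iff' measurableSet_Icc).2
        (Filter.Eventually.of_forall fun v hv => ?_)
      rcases mem_Icc.1 hv with ⟨h1, h2⟩
      have hab : |v| ≤ 2 := abs_le.2 ⟨h1, h2⟩
      have : (0:ℝ) ≤ min (b v) (1 - |v|/2) := le_min (hb0 v) (by linarith)
      exact this
    rw [hres, ENNReal.ofReal_mul (by norm_num : (0:ℝ) ≤ 1/2),
      ofReal_integral_eq_lintegral_ofReal hint h0]
    have hof : ∀ v : ℝ, ENNReal.ofReal (2 * min (b v) (1 - |v|/2))
        = ENNReal.ofReal 2 * ENNReal.ofReal (min (b v) (1 - |v|/2)) := fun v =>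
      ENNReal.ofReal_mul (by norm_num)
    rw [lintegral_congr hof, lintegral_const_mul' _ _ ENNReal.ofReal_ne_top,
      show ENNReal.ofReal (1/2) = (ENNReal.ofReal 2)⁻¹ by
        rw [show (1:ℝ)/2 = 2⁻¹ by norm_num, ENNReal.ofReal_inv_of_pos (by norm_num)],
      ← mul_assoc ((ENNReal.ofReal 2)⁻¹) (ENNReal.ofReal 2),
      ENNReal.inv_mul_cancel (by simp) (by simp), one_mul]
end

section
/- Let X1, X2 be i.i.d. uniform on [θ−1, θ+1], M = (X1+X2)/2, V = X2−X1, and let b be measurable with P(b(V) > 1−|V|/2) > 0. Define b′(v) = min(b(v), 1−|v|/2). Then the interval M ± b′(V) has the same coverage probability as M ± b(V), b′(v) ≤ b(v) for all v, and b′(V) < b(V) with positive probability. -/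
open MeasureTheory ProbabilityTheory Set

lemma key18 (θ x1 x2 : ℝ) (h1 : x1 ∈ Icc (θ-1) (θ+1)) (h2 : x2 ∈ Icc (θ-1) (θ+1)) :
    |(x1+x2)/2 - θ| ≤ 1 - |x2 - x1|/2 := by
  obtain ⟨a1, b1⟩ := h1
  obtain ⟨a2, b2⟩ := h2
  rw [abs_le]
  rcases abs_cases (x2 - x1) with ⟨h, _⟩ | ⟨h, _⟩ <;> rw [h] <;> constructor <;> linarith

theorem stmt18 (θ : ℝ) (b : ℝ → ℝ) (hb : Measurable b)
    (hpos : 0 < joint θ {p : ℝ × ℝ | 1 - |p.2 - p.1|/2 < b (p.2 - p.1)}) :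
    joint θ {p : ℝ × ℝ | |(p.1 + p.2)/2 - θ| ≤ min (b (p.2 - p.1)) (1 - |p.2 - p.1|/2)}
      = joint θ {p : ℝ × ℝ | |(p.1 + p.2)/2 - θ| ≤ b (p.2 - p.1)} ∧
    (∀ v : ℝ, min (b v) (1 - |v|/2) ≤ b v) ∧
    0 < joint θ {p : ℝ × ℝ | min (b (p.2 - p.1)) (1 - |p.2 - p.1|/2) < b (p.2 - p.1)} := by
  haveI : SFinite (unifIcc (θ-1) (θ+1)) := by unfold unifIcc; infer_instance
  have hmuc : unifIcc (θ-1) (θ+1) (Icc (θ-1) (θ+1))ᶜ = 0 := by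
    simp [unifIcc, Measure.restrict_apply measurableSet_Icc.compl]
  have hT : joint θ ((Icc (θ-1) (θ+1) ×ˢ Icc (θ-1) (θ+1) : Set (ℝ × ℝ)))ᶜ = 0 := by
    have hsub : ((Icc (θ-1) (θ+1) ×ˢ Icc (θ-1) (θ+1) : Set (ℝ × ℝ)))ᶜ ⊆
        ((Icc (θ-1) (θ+1))ᶜ ×ˢ (univ : Set ℝ)) ∪ ((univ : Set ℝ) ×ˢ (Icc (θ-1) (θ+1))ᶜ) := by
      intro p hp
      simp only [mem_compl_iff, mem_prod, not_and_or] at hp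
      simp only [mem_union, mem_prod, mem_univ, and_true, true_and, mem_compl_iff]
      tauto
    refine le_antisymm (le_trans (measure_mono hsub) (le_trans (measure_union_le _ _) ?_))
      (zero_le)
    rw [joint, Measure.prod_prod, Measure.prod_prod, hmuc]
    simp
  refine ⟨?_, fun v => min_le_left _ _, ?_⟩
  · apply measure_congr
    rw [Filter.eventuallyEq_set]
    filter_upwards [measure_eq_zero_iff_ae_notMem.mp hT] with p hp
    simp only [mem_compl_iff, not_not] at hp
    obtain ⟨h1, h2⟩ := hp
    simp only [mem_setOf_eq, le_min_iff]
    exact ⟨fun h => h.1, fun h => ⟨h, key18 θ p.1 p.2 h1 h2⟩⟩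
  · have heq : {p : ℝ × ℝ | min (b (p.2 - p.1)) (1 - |p.2 - p.1|/2) < b (p.2 - p.1)}
        = {p : ℝ × ℝ | 1 - |p.2 - p.1|/2 < b (p.2 - p.1)} := by
      ext p; simp [min_lt_iff]
    rw [heq]; exact hpos
end
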